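/- arXiv:2510.01720 — 9 statements merged into one kernel-verified Lean document; each statement's English description precedes it below -/
import Mathlib

section
/- Let g be a Boolean function on n₁ variables and h a Boolean function on n₂ variables, and define the direct sum f(x, y) = g(x) ⊕ h(y). Then max{AI(g), AI(h)} ≤ AI(f) ≤ AI(g) + AI(h). -/
open Finset

abbrev BF (n : ℕ) := (Fin n → ZMod 2) → ZMod 2

def bfInner {n : ℕ} (a x : Fin n → ZMod 2) : ZMod 2 := ∑ i, a i * x i

def walsh {n : ℕ} (f : BF n) (a : Fin n → ZMod 2) : ℤ :=
  ∑ x : Fin n → ZMod 2, (-1 : ℤ) ^ ((f x + bfInner a x).val)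

def hdist {n : ℕ} (f g : BF n) : ℕ :=
  (Finset.univ.filter (fun x => f x ≠ g x)).card

def wt {n : ℕ} (a : Fin n → ZMod 2) : ℕ :=
  (Finset.univ.filter (fun i => a i ≠ 0)).card

def resilient {n : ℕ} (m : ℕ) (f : BF n) : Prop :=
  ∀ a, wt a ≤ m → walsh f a = 0

def balanced {n : ℕ} (f : BF n) : Prop :=
  (Finset.univ.filter (fun x => f x = 1)).card = 2 ^ (n - 1)

noncomputable def nl {n : ℕ} (f : BF n) : ℕ :=
  sInf {d | ∃ (a : Fin n → ZMod 2) (c : ZMod 2), d = hdist f (fun x => c + bfInner a x)}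

def anf {n : ℕ} (f : BF n) (a : Fin n → ZMod 2) : ZMod 2 :=
  ∑ x ∈ Finset.univ.filter (fun x : Fin n → ZMod 2 => ∀ i, a i = 0 → x i = 0), f x

def degree {n : ℕ} (f : BF n) : ℕ :=
  (Finset.univ.filter (fun a => anf f a ≠ 0)).sup wt

noncomputable def AI {n : ℕ} (f : BF n) : ℕ :=
  sInf {d | ∃ g : BF n, g ≠ 0 ∧ ((∀ x, g x * f x = 0) ∨ (∀ x, g x * (1 + f x) = 0)) ∧ degree g = d}

-- indicator/parity key lemma
lemma key {n : ℕ} (a y : Fin n → ZMod 2) :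
    (∑ b ∈ Finset.univ.filter (fun b : Fin n → ZMod 2 => ∀ i, a i = 0 → b i = 0),
      (if (∀ i, b i = 0 → y i = 0) then (1 : ZMod 2) else 0)) = if y = a then 1 else 0 := by
  rw [Finset.sum_boole, Finset.filter_filter]
  have hset : (Finset.univ.filter
      (fun b : Fin n → ZMod 2 => (∀ i, a i = 0 → b i = 0) ∧ (∀ i, b i = 0 → y i = 0)))
      = Fintype.piFinset (fun i => Finset.univ.filter
          (fun v : ZMod 2 => (a i = 0 → v = 0) ∧ (v = 0 → y i = 0))) := by
    ext b
    simp [Fintype.mem_piFinset, forall_and]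
  rw [hset, Fintype.card_piFinset, Nat.cast_prod]
  have hfac : ∀ i, (((Finset.univ.filter
      (fun v : ZMod 2 => (a i = 0 → v = 0) ∧ (v = 0 → y i = 0))).card : ZMod 2))
      = if y i = a i then 1 else 0 := by
    intro i
    have : ∀ w u : ZMod 2, (((Finset.univ.filter
        (fun v : ZMod 2 => (w = 0 → v = 0) ∧ (v = 0 → u = 0))).card : ZMod 2))
        = if u = w then 1 else 0 := by decide
    exact this (a i) (y i)
  simp_rw [hfac]
  rw [Finset.prod_boole]
  congr 1
  simp [funext_iff]

lemma anf_inv {n : ℕ} (f : BF n) (x : Fin n → ZMod 2) :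
    (∑ a ∈ Finset.univ.filter (fun a : Fin n → ZMod 2 => ∀ i, x i = 0 → a i = 0),
      anf f a) = f x := by
  unfold anf
  calc (∑ a ∈ Finset.univ.filter (fun a : Fin n → ZMod 2 => ∀ i, x i = 0 → a i = 0),
        ∑ y ∈ Finset.univ.filter (fun y : Fin n → ZMod 2 => ∀ i, a i = 0 → y i = 0), f y)
      = ∑ a ∈ Finset.univ.filter (fun a : Fin n → ZMod 2 => ∀ i, x i = 0 → a i = 0),
        ∑ y : Fin n → ZMod 2, (if (∀ i, a i = 0 → y i = 0) then (1:ZMod 2) else 0) * f y := by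
        refine Finset.sum_congr rfl fun a _ => ?_
        rw [Finset.sum_filter]
        refine Finset.sum_congr rfl fun y _ => ?_
        split <;> simp
    _ = ∑ y : Fin n → ZMod 2,
        (∑ a ∈ Finset.univ.filter (fun a : Fin n → ZMod 2 => ∀ i, x i = 0 → a i = 0),
          (if (∀ i, a i = 0 → y i = 0) then (1:ZMod 2) else 0)) * f y := by
        rw [Finset.sum_comm]
        exact Finset.sum_congr rfl fun y _ => (Finset.sum_mul _ _ _).symm
    _ = ∑ y : Fin n → ZMod 2, (if y = x then (1:ZMod 2) else 0) * f y := by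
        refine Finset.sum_congr rfl fun y _ => ?_
        rw [key]
    _ = f x := by simp

lemma append_decomp {n₁ n₂ : ℕ} (z : Fin (n₁ + n₂) → ZMod 2) :
    Fin.append (fun i => z (Fin.castAdd n₂ i)) (fun j => z (Fin.natAdd n₁ j)) = z := by
  funext i
  refine Fin.addCases (fun i => ?_) (fun j => ?_) i
  · rw [Fin.append_left]
  · rw [Fin.append_right]

def pairEquiv (n₁ n₂ : ℕ) : ((Fin n₁ → ZMod 2) × (Fin n₂ → ZMod 2)) ≃ (Fin (n₁ + n₂) → ZMod 2) where
  toFun p := Fin.append p.1 p.2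
  invFun z := (fun i => z (Fin.castAdd n₂ i), fun j => z (Fin.natAdd n₁ j))
  left_inv p := by
    refine Prod.ext (funext fun i => ?_) (funext fun j => ?_)
    · exact Fin.append_left _ _ i
    · exact Fin.append_right _ _ j
  right_inv z := append_decomp z

lemma sum_pairs {n₁ n₂ : ℕ} {M : Type*} [AddCommMonoid M] (F : (Fin (n₁ + n₂) → ZMod 2) → M) :
    (∑ z : Fin (n₁ + n₂) → ZMod 2, F z)
      = ∑ x : Fin n₁ → ZMod 2, ∑ y : Fin n₂ → ZMod 2, F (Fin.append x y) := by
  have e := Fintype.sum_equiv (pairEquiv n₁ n₂) (fun p => F (Fin.append p.1 p.2)) F (fun p => rfl)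
  rw [← e, Fintype.sum_prod_type]

lemma append_le_iff {n₁ n₂ : ℕ} (c : Fin (n₁ + n₂) → ZMod 2)
    (x : Fin n₁ → ZMod 2) (y : Fin n₂ → ZMod 2) :
    (∀ i, c i = 0 → Fin.append x y i = 0) ↔
      ((∀ i, c (Fin.castAdd n₂ i) = 0 → x i = 0) ∧ (∀ j, c (Fin.natAdd n₁ j) = 0 → y j = 0)) := by
  constructor
  · intro H
    constructor
    · intro i hi
      have := H (Fin.castAdd n₂ i) hi
      rwa [Fin.append_left] at this
    · intro j hj
      have := H (Fin.natAdd n₁ j) hj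
      rwa [Fin.append_right] at this
  · rintro ⟨H₁, H₂⟩ i hi
    refine Fin.addCases (fun i hi => ?_) (fun j hj => ?_) i hi
    · rw [Fin.append_left]; exact H₁ i hi
    · rw [Fin.append_right]; exact H₂ j hj

lemma wt_split {n₁ n₂ : ℕ} (c : Fin (n₁ + n₂) → ZMod 2) :
    wt c = wt (fun i => c (Fin.castAdd n₂ i)) + wt (fun j => c (Fin.natAdd n₁ j)) := by
  unfold wt
  rw [Finset.card_filter, Finset.card_filter, Finset.card_filter, Fin.sum_univ_add]

lemma wt_append {n₁ n₂ : ℕ} (a : Fin n₁ → ZMod 2) (b : Fin n₂ → ZMod 2) :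
    wt (Fin.append a b) = wt a + wt b := by
  rw [wt_split]
  simp only [Fin.append_left, Fin.append_right]

lemma degree_le {n : ℕ} (f : BF n) (a : Fin n → ZMod 2) (h : anf f a ≠ 0) : wt a ≤ degree f :=
  Finset.le_sup (by simpa using h)

lemma anf_prod {n₁ n₂ : ℕ} (p : BF n₁) (q : BF n₂) (c : Fin (n₁ + n₂) → ZMod 2) :
    anf (fun z => p (fun i => z (Fin.castAdd n₂ i)) * q (fun j => z (Fin.natAdd n₁ j))) c
      = anf p (fun i => c (Fin.castAdd n₂ i)) * anf q (fun j => c (Fin.natAdd n₁ j)) := by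
  unfold anf
  rw [Finset.sum_filter, sum_pairs]
  rw [Finset.sum_filter, Finset.sum_filter, Finset.sum_mul_sum]
  refine Finset.sum_congr rfl fun x _ => Finset.sum_congr rfl fun y _ => ?_
  simp only [append_le_iff, Fin.append_left, Fin.append_right]
  by_cases hx : (∀ i, c (Fin.castAdd n₂ i) = 0 → x i = 0) <;>
    by_cases hy : (∀ j, c (Fin.natAdd n₁ j) = 0 → y j = 0)
  · rw [if_pos ⟨hx, hy⟩, if_pos hy, if_pos hx]
  · rw [if_neg (fun h => hy h.2), if_neg hy]; simp
  · rw [if_neg (fun h => hx h.1), if_pos hy, if_neg hx]; simp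
  · rw [if_neg (fun h => hy h.2), if_neg hy]; simp

lemma ite_and_mul (A B : Prop) [Decidable A] [Decidable B] (t : ZMod 2) :
    (if A ∧ B then t else 0) = (if A then (1:ZMod 2) else 0) * ((if B then 1 else 0) * t) := by
  by_cases hA : A <;> by_cases hB : B <;> simp [hA, hB]

lemma ite_and_mul' (A B : Prop) [Decidable A] [Decidable B] (t : ZMod 2) :
    (if A ∧ B then t else 0) = (if B then (1:ZMod 2) else 0) * ((if A then 1 else 0) * t) := by
  by_cases hA : A <;> by_cases hB : B <;> simp [hA, hB]

lemma anf_restrict₂ {n₁ n₂ : ℕ} (u : BF (n₁ + n₂)) (y₀ : Fin n₂ → ZMod 2)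
    (a : Fin n₁ → ZMod 2) :
    anf (fun x => u (Fin.append x y₀)) a
      = ∑ c₂ ∈ Finset.univ.filter (fun c₂ : Fin n₂ → ZMod 2 => ∀ j, y₀ j = 0 → c₂ j = 0),
          anf u (Fin.append a c₂) := by
  have step1 : ∀ x : Fin n₁ → ZMod 2, u (Fin.append x y₀)
      = ∑ c₁ : Fin n₁ → ZMod 2, ∑ c₂ : Fin n₂ → ZMod 2,
          ((if (∀ i, x i = 0 → c₁ i = 0) then (1:ZMod 2) else 0)
            * ((if (∀ j, y₀ j = 0 → c₂ j = 0) then (1:ZMod 2) else 0)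
              * anf u (Fin.append c₁ c₂))) := by
    intro x
    rw [← anf_inv u (Fin.append x y₀), Finset.sum_filter, sum_pairs]
    refine Finset.sum_congr rfl fun c₁ _ => Finset.sum_congr rfl fun c₂ _ => ?_
    simp only [append_le_iff, Fin.append_left, Fin.append_right]
    exact ite_and_mul _ _ _
  have lhs : anf (fun x => u (Fin.append x y₀)) a
      = ∑ x ∈ Finset.univ.filter (fun x : Fin n₁ → ZMod 2 => ∀ i, a i = 0 → x i = 0),
          u (Fin.append x y₀) := rfl
  rw [lhs]
  calc (∑ x ∈ Finset.univ.filter (fun x : Fin n₁ → ZMod 2 => ∀ i, a i = 0 → x i = 0),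
          u (Fin.append x y₀))
      = ∑ x ∈ Finset.univ.filter (fun x : Fin n₁ → ZMod 2 => ∀ i, a i = 0 → x i = 0),
          ∑ c₁ : Fin n₁ → ZMod 2, ∑ c₂ : Fin n₂ → ZMod 2,
          ((if (∀ i, x i = 0 → c₁ i = 0) then (1:ZMod 2) else 0)
            * ((if (∀ j, y₀ j = 0 → c₂ j = 0) then (1:ZMod 2) else 0)
              * anf u (Fin.append c₁ c₂))) := Finset.sum_congr rfl fun x _ => step1 x
    _ = ∑ c₁ : Fin n₁ → ZMod 2, ∑ c₂ : Fin n₂ → ZMod 2,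
          ∑ x ∈ Finset.univ.filter (fun x : Fin n₁ → ZMod 2 => ∀ i, a i = 0 → x i = 0),
          ((if (∀ i, x i = 0 → c₁ i = 0) then (1:ZMod 2) else 0)
            * ((if (∀ j, y₀ j = 0 → c₂ j = 0) then (1:ZMod 2) else 0)
              * anf u (Fin.append c₁ c₂))) := by
        rw [Finset.sum_comm]
        exact Finset.sum_congr rfl fun c₁ _ => Finset.sum_comm
    _ = ∑ c₁ : Fin n₁ → ZMod 2, ∑ c₂ : Fin n₂ → ZMod 2,
          ((if c₁ = a then (1:ZMod 2) else 0)
            * ((if (∀ j, y₀ j = 0 → c₂ j = 0) then (1:ZMod 2) else 0)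
              * anf u (Fin.append c₁ c₂))) := by
        refine Finset.sum_congr rfl fun c₁ _ => Finset.sum_congr rfl fun c₂ _ => ?_
        rw [← Finset.sum_mul, key]
    _ = ∑ c₂ ∈ Finset.univ.filter (fun c₂ : Fin n₂ → ZMod 2 => ∀ j, y₀ j = 0 → c₂ j = 0),
          anf u (Fin.append a c₂) := by
        rw [Finset.sum_comm, Finset.sum_filter]
        refine Finset.sum_congr rfl fun c₂ _ => ?_
        simp only [ite_mul, one_mul, zero_mul, Finset.sum_ite_eq', Finset.mem_univ, if_true]

lemma anf_restrict₁ {n₁ n₂ : ℕ} (u : BF (n₁ + n₂)) (x₀ : Fin n₁ → ZMod 2)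
    (b : Fin n₂ → ZMod 2) :
    anf (fun y => u (Fin.append x₀ y)) b
      = ∑ c₁ ∈ Finset.univ.filter (fun c₁ : Fin n₁ → ZMod 2 => ∀ i, x₀ i = 0 → c₁ i = 0),
          anf u (Fin.append c₁ b) := by
  have step1 : ∀ y : Fin n₂ → ZMod 2, u (Fin.append x₀ y)
      = ∑ c₁ : Fin n₁ → ZMod 2, ∑ c₂ : Fin n₂ → ZMod 2,
          ((if (∀ j, y j = 0 → c₂ j = 0) then (1:ZMod 2) else 0)
            * ((if (∀ i, x₀ i = 0 → c₁ i = 0) then (1:ZMod 2) else 0)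
              * anf u (Fin.append c₁ c₂))) := by
    intro y
    rw [← anf_inv u (Fin.append x₀ y), Finset.sum_filter, sum_pairs]
    refine Finset.sum_congr rfl fun c₁ _ => Finset.sum_congr rfl fun c₂ _ => ?_
    simp only [append_le_iff, Fin.append_left, Fin.append_right]
    exact ite_and_mul' _ _ _
  have lhs : anf (fun y => u (Fin.append x₀ y)) b
      = ∑ y ∈ Finset.univ.filter (fun y : Fin n₂ → ZMod 2 => ∀ j, b j = 0 → y j = 0),
          u (Fin.append x₀ y) := rfl
  rw [lhs]
  calc (∑ y ∈ Finset.univ.filter (fun y : Fin n₂ → ZMod 2 => ∀ j, b j = 0 → y j = 0),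
          u (Fin.append x₀ y))
      = ∑ y ∈ Finset.univ.filter (fun y : Fin n₂ → ZMod 2 => ∀ j, b j = 0 → y j = 0),
          ∑ c₁ : Fin n₁ → ZMod 2, ∑ c₂ : Fin n₂ → ZMod 2,
          ((if (∀ j, y j = 0 → c₂ j = 0) then (1:ZMod 2) else 0)
            * ((if (∀ i, x₀ i = 0 → c₁ i = 0) then (1:ZMod 2) else 0)
              * anf u (Fin.append c₁ c₂))) := Finset.sum_congr rfl fun y _ => step1 y
    _ = ∑ c₁ : Fin n₁ → ZMod 2, ∑ c₂ : Fin n₂ → ZMod 2,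
          ∑ y ∈ Finset.univ.filter (fun y : Fin n₂ → ZMod 2 => ∀ j, b j = 0 → y j = 0),
          ((if (∀ j, y j = 0 → c₂ j = 0) then (1:ZMod 2) else 0)
            * ((if (∀ i, x₀ i = 0 → c₁ i = 0) then (1:ZMod 2) else 0)
              * anf u (Fin.append c₁ c₂))) := by
        rw [Finset.sum_comm]
        exact Finset.sum_congr rfl fun c₁ _ => Finset.sum_comm
    _ = ∑ c₁ : Fin n₁ → ZMod 2, ∑ c₂ : Fin n₂ → ZMod 2,
          ((if c₂ = b then (1:ZMod 2) else 0)
            * ((if (∀ i, x₀ i = 0 → c₁ i = 0) then (1:ZMod 2) else 0)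
              * anf u (Fin.append c₁ c₂))) := by
        refine Finset.sum_congr rfl fun c₁ _ => Finset.sum_congr rfl fun c₂ _ => ?_
        rw [← Finset.sum_mul, key]
    _ = ∑ c₁ ∈ Finset.univ.filter (fun c₁ : Fin n₁ → ZMod 2 => ∀ i, x₀ i = 0 → c₁ i = 0),
          anf u (Fin.append c₁ b) := by
        rw [Finset.sum_filter]
        refine Finset.sum_congr rfl fun c₁ _ => ?_
        simp only [ite_mul, one_mul, zero_mul, Finset.sum_ite_eq', Finset.mem_univ, if_true]

lemma zc : ∀ v : ZMod 2, v = 0 ∨ v = 1 := by decide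

lemma AI_nonempty {n : ℕ} (f : BF n) :
    {d | ∃ g : BF n, g ≠ 0 ∧ ((∀ x, g x * f x = 0) ∨ (∀ x, g x * (1 + f x) = 0)) ∧
      degree g = d}.Nonempty := by
  by_cases hc : ∀ x, f x = 1
  · refine ⟨degree f, f, ?_, Or.inr fun x => by rw [hc x]; decide, rfl⟩
    intro h0
    have := congrFun h0 (fun _ => 0)
    rw [hc] at this
    exact one_ne_zero this
  · push_neg at hc
    obtain ⟨x₀, hx₀⟩ := hc
    have hfx : f x₀ = 0 := (zc (f x₀)).resolve_right hx₀
    refine ⟨degree (fun x => 1 + f x), fun x => 1 + f x, ?_, Or.inl fun x => ?_, rfl⟩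
    · intro h0
      have := congrFun h0 x₀
      rw [hfx] at this
      simp at this
    · show (1 + f x) * f x = 0
      rcases zc (f x) with hv | hv <;> rw [hv] <;> decide

lemma AI_le {n : ℕ} (f p : BF n) (hp : p ≠ 0)
    (hann : (∀ x, p x * f x = 0) ∨ (∀ x, p x * (1 + f x) = 0)) : AI f ≤ degree p :=
  Nat.sInf_le ⟨p, hp, hann, rfl⟩

lemma AI_mem {n : ℕ} (f : BF n) : ∃ u : BF n, u ≠ 0 ∧
    ((∀ x, u x * f x = 0) ∨ (∀ x, u x * (1 + f x) = 0)) ∧ degree u = AI f :=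
  Nat.sInf_mem (AI_nonempty f)

lemma ann11 : ∀ P G Q H : ZMod 2, P*G=0 → Q*H=0 → (P*Q)*(G+H)=0 := by decide
lemma ann12 : ∀ P G Q H : ZMod 2, P*G=0 → Q*(1+H)=0 → (P*Q)*(1+(G+H))=0 := by decide
lemma ann21 : ∀ P G Q H : ZMod 2, P*(1+G)=0 → Q*H=0 → (P*Q)*(1+(G+H))=0 := by decide
lemma ann22 : ∀ P G Q H : ZMod 2, P*(1+G)=0 → Q*(1+H)=0 → (P*Q)*(G+H)=0 := by decide

theorem AI_direct_sum (n₁ n₂ : ℕ) (g : BF n₁) (h : BF n₂) (f : BF (n₁ + n₂))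
    (hf : ∀ z : Fin (n₁ + n₂) → ZMod 2,
      f z = g (fun i => z (Fin.castAdd n₂ i)) + h (fun j => z (Fin.natAdd n₁ j))) :
    max (AI g) (AI h) ≤ AI f ∧ AI f ≤ AI g + AI h := by
  have hfx₂ : ∀ (x : Fin n₁ → ZMod 2) (y : Fin n₂ → ZMod 2),
      f (Fin.append x y) = g x + h y := by
    intro x y
    rw [hf]
    rw [show (fun i => Fin.append x y (Fin.castAdd n₂ i)) = x from funext (Fin.append_left x y),
        show (fun j => Fin.append x y (Fin.natAdd n₁ j)) = y from funext (Fin.append_right x y)]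
  have e1 : ∀ v : ZMod 2, (1 : ZMod 2) + (v + 1) = v := by decide
  have e2 : ∀ v : ZMod 2, (1 : ZMod 2) + (1 + v) = v := by decide
  constructor
  · rw [max_le_iff]
    obtain ⟨u, hu0, hann, hdeg⟩ := AI_mem f
    rw [Function.ne_iff] at hu0
    obtain ⟨z₀, hz₀⟩ := hu0
    have hz₀' : u z₀ ≠ 0 := by simpa using hz₀
    constructor
    · -- AI g ≤ AI f
      obtain ⟨y₀, hy₀⟩ : ∃ y₀, y₀ = fun j => z₀ (Fin.natAdd n₁ j) := ⟨_, rfl⟩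
      have hu'0 : (fun x => u (Fin.append x y₀)) ≠ 0 := by
        rw [Function.ne_iff]
        refine ⟨fun i => z₀ (Fin.castAdd n₂ i), ?_⟩
        simpa [hy₀, append_decomp z₀] using hz₀'
      have hdeg' : degree (fun x => u (Fin.append x y₀)) ≤ degree u := by
        apply Finset.sup_le
        intro a ha
        rw [Finset.mem_filter] at ha
        have h2 := ha.2
        rw [anf_restrict₂] at h2
        obtain ⟨c₂, _, hc₂⟩ := Finset.exists_ne_zero_of_sum_ne_zero h2
        calc wt a ≤ wt a + wt c₂ := Nat.le_add_right _ _
          _ = wt (Fin.append a c₂) := (wt_append a c₂).symm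
          _ ≤ degree u := degree_le u _ hc₂
      refine le_trans (le_trans ?_ hdeg') (le_of_eq hdeg)
      rcases hann with hA | hA
      · rcases zc (h y₀) with hh | hh
        · refine AI_le g _ hu'0 (Or.inl fun x => ?_)
          have := hA (Fin.append x y₀)
          rw [hfx₂, hh, add_zero] at this
          exact this
        · refine AI_le g _ hu'0 (Or.inr fun x => ?_)
          have := hA (Fin.append x y₀)
          rw [hfx₂, hh, add_comm] at this
          exact this
      · rcases zc (h y₀) with hh | hh
        · refine AI_le g _ hu'0 (Or.inr fun x => ?_)
          have := hA (Fin.append x y₀)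
          rw [hfx₂, hh, add_zero] at this
          exact this
        · refine AI_le g _ hu'0 (Or.inl fun x => ?_)
          have := hA (Fin.append x y₀)
          rw [hfx₂, hh, e1] at this
          exact this
    · -- AI h ≤ AI f
      obtain ⟨x₀, hx₀⟩ : ∃ x₀, x₀ = fun i => z₀ (Fin.castAdd n₂ i) := ⟨_, rfl⟩
      have hu'0 : (fun y => u (Fin.append x₀ y)) ≠ 0 := by
        rw [Function.ne_iff]
        refine ⟨fun j => z₀ (Fin.natAdd n₁ j), ?_⟩
        simpa [hx₀, append_decomp z₀] using hz₀'
      have hdeg' : degree (fun y => u (Fin.append x₀ y)) ≤ degree u := by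
        apply Finset.sup_le
        intro b hb
        rw [Finset.mem_filter] at hb
        have h2 := hb.2
        rw [anf_restrict₁] at h2
        obtain ⟨c₁, _, hc₁⟩ := Finset.exists_ne_zero_of_sum_ne_zero h2
        calc wt b ≤ wt c₁ + wt b := Nat.le_add_left _ _
          _ = wt (Fin.append c₁ b) := (wt_append c₁ b).symm
          _ ≤ degree u := degree_le u _ hc₁
      refine le_trans (le_trans ?_ hdeg') (le_of_eq hdeg)
      rcases hann with hA | hA
      · rcases zc (g x₀) with hg | hg
        · refine AI_le h _ hu'0 (Or.inl fun y => ?_)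
          have := hA (Fin.append x₀ y)
          rw [hfx₂, hg, zero_add] at this
          exact this
        · refine AI_le h _ hu'0 (Or.inr fun y => ?_)
          have := hA (Fin.append x₀ y)
          rw [hfx₂, hg] at this
          exact this
      · rcases zc (g x₀) with hg | hg
        · refine AI_le h _ hu'0 (Or.inr fun y => ?_)
          have := hA (Fin.append x₀ y)
          rw [hfx₂, hg, zero_add] at this
          exact this
        · refine AI_le h _ hu'0 (Or.inl fun y => ?_)
          have := hA (Fin.append x₀ y)
          rw [hfx₂, hg, e2] at this
          exact this
  · -- AI f ≤ AI g + AI h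
    obtain ⟨p, hp0, hpann, hpdeg⟩ := AI_mem g
    obtain ⟨q, hq0, hqann, hqdeg⟩ := AI_mem h
    rw [Function.ne_iff] at hp0 hq0
    obtain ⟨xp, hxp⟩ := hp0
    obtain ⟨yq, hyq⟩ := hq0
    have hxp' : p xp ≠ 0 := by simpa using hxp
    have hyq' : q yq ≠ 0 := by simpa using hyq
    have hr0 : (fun z : Fin (n₁ + n₂) → ZMod 2 =>
        p (fun i => z (Fin.castAdd n₂ i)) * q (fun j => z (Fin.natAdd n₁ j))) ≠ 0 := by
      rw [Function.ne_iff]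
      refine ⟨Fin.append xp yq, ?_⟩
      have ea : (fun i => Fin.append xp yq (Fin.castAdd n₂ i)) = xp :=
        funext (Fin.append_left xp yq)
      have eb : (fun j => Fin.append xp yq (Fin.natAdd n₁ j)) = yq :=
        funext (Fin.append_right xp yq)
      simp only [ea, eb, Pi.zero_apply]
      exact mul_ne_zero hxp' hyq'
    have hrdeg : degree (fun z : Fin (n₁ + n₂) → ZMod 2 =>
        p (fun i => z (Fin.castAdd n₂ i)) * q (fun j => z (Fin.natAdd n₁ j)))
        ≤ degree p + degree q := by
      apply Finset.sup_le
      intro c hc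
      rw [Finset.mem_filter] at hc
      have h2 := hc.2
      rw [anf_prod] at h2
      rw [wt_split c]
      exact Nat.add_le_add (degree_le p _ (left_ne_zero_of_mul h2))
        (degree_le q _ (right_ne_zero_of_mul h2))
    rw [← hpdeg, ← hqdeg]
    refine le_trans (AI_le f _ hr0 ?_) hrdeg
    rcases hpann with hP | hP <;> rcases hqann with hQ | hQ
    · exact Or.inl fun z => by rw [hf z]; exact ann11 _ _ _ _ (hP _) (hQ _)
    · exact Or.inr fun z => by rw [hf z]; exact ann12 _ _ _ _ (hP _) (hQ _)
    · exact Or.inr fun z => by rw [hf z]; exact ann21 _ _ _ _ (hP _) (hQ _)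
    · exact Or.inl fun z => by rw [hf z]; exact ann22 _ _ _ _ (hP _) (hQ _)
end

section
/- Let k ≥ 2, ψ : F₂ᵏ → F₂ᵏ an affine map, h : F₂ᵏ → F₂, and define the Maiorana–McFarland function F(x,y) = ⟨ψ(x), y⟩ ⊕ h(x) on 2k variables. Then AI(F) ≥ AI(h). -/
open Finset

variable {n : ℕ}

def suppF (a : Fin n → ZMod 2) : Finset (Fin n) := Finset.univ.filter (fun i => a i ≠ 0)

def indF (s : Finset (Fin n)) : Fin n → ZMod 2 := fun i => if i ∈ s then 1 else 0

lemma zmod2_cases (a : ZMod 2) : a = 0 ∨ a = 1 := by revert a; decide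

lemma suppF_indF (s : Finset (Fin n)) : suppF (indF s) = s := by
  ext i; simp [suppF, indF]

lemma indF_suppF (a : Fin n → ZMod 2) : indF (suppF a) = a := by
  funext i
  rcases zmod2_cases (a i) with h | h <;> simp [indF, suppF, h]

lemma wt_indF (s : Finset (Fin n)) : wt (indF s) = s.card := by
  rw [show wt (indF s) = (suppF (indF s)).card from rfl, suppF_indF]

lemma wt_eq (a : Fin n → ZMod 2) : wt a = (suppF a).card := rfl

lemma sum_dle (a : Fin n → ZMod 2) (f : (Fin n → ZMod 2) → ZMod 2) :
    ∑ x ∈ Finset.univ.filter (fun x : Fin n → ZMod 2 => ∀ i, a i = 0 → x i = 0), f x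
      = ∑ s ∈ (suppF a).powerset, f (indF s) := by
  refine Finset.sum_nbij' (fun x => suppF x) (fun s => indF s) ?_ ?_ ?_ ?_ ?_
  · intro x hx
    simp only [mem_filter, mem_univ, true_and] at hx
    simp only [mem_powerset]
    intro i hi
    simp only [suppF, mem_filter, mem_univ, true_and] at hi ⊢
    intro h0; exact hi (hx i h0)
  · intro s hs
    simp only [mem_powerset] at hs
    simp only [mem_filter, mem_univ, true_and]
    intro i h0
    by_contra hne
    have : i ∈ suppF (indF s) := by simp [suppF, hne]
    rw [suppF_indF] at this
    have := hs this
    simp [suppF, h0] at this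
  · intro x _; exact indF_suppF x
  · intro s _; exact suppF_indF s
  · intro x _; rw [indF_suppF]

def anfS (f : BF n) (s : Finset (Fin n)) : ZMod 2 := ∑ t ∈ s.powerset, f (indF t)

lemma anf_eq_anfS (f : BF n) (a : Fin n → ZMod 2) : anf f a = anfS f (suppF a) :=
  sum_dle a f

lemma card_filter_subset {s w : Finset (Fin n)} (hws : w ⊆ s) :
    (s.powerset.filter fun u => w ⊆ u).card = 2 ^ ((s \ w).card) := by
  rw [← Finset.card_powerset]
  refine Finset.card_bij' (fun u _ => u \ w) (fun v _ => v ∪ w) ?_ ?_ ?_ ?_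
  · intro u hu
    simp only [mem_filter, mem_powerset] at hu
    exact mem_powerset.2 (Finset.sdiff_subset_sdiff hu.1 Finset.Subset.rfl)
  · intro v hv
    simp only [mem_powerset] at hv
    simp only [mem_filter, mem_powerset]
    exact ⟨Finset.union_subset (hv.trans Finset.sdiff_subset) hws, Finset.subset_union_right⟩
  · intro u hu
    simp only [mem_filter, mem_powerset] at hu
    exact Finset.sdiff_union_of_subset hu.2
  · intro v hv
    simp only [mem_powerset] at hv
    have hd : Disjoint v w := Finset.disjoint_of_subset_left hv (Finset.sdiff_disjoint)
    rw [Finset.union_sdiff_distrib, Finset.sdiff_self, Finset.union_empty,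
      Finset.sdiff_eq_self_of_disjoint hd]

lemma card_cast {s w : Finset (Fin n)} (hws : w ⊆ s) :
    (((s.powerset.filter fun u => w ⊆ u).card : ℕ) : ZMod 2) = if w = s then 1 else 0 := by
  rw [card_filter_subset hws]
  by_cases h : w = s
  · simp [h]
  · have : s \ w ≠ ∅ := by
      intro he
      exact h (Finset.Subset.antisymm hws (by
        intro i hi
        by_contra hiw
        have : i ∈ s \ w := Finset.mem_sdiff.2 ⟨hi, hiw⟩
        simp [he] at this))
    obtain ⟨m, hm⟩ : ∃ m, (s \ w).card = m + 1 := by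
      rcases Nat.exists_eq_succ_of_ne_zero (Finset.card_ne_zero_of_mem
        (Finset.nonempty_iff_ne_empty.2 this).choose_spec) with ⟨m, hm⟩
      exact ⟨m, hm⟩
    rw [hm]
    rw [if_neg h]
    push_cast
    rw [show ((2:ZMod 2)) = 0 from rfl]
    simp

lemma powerset_filter_eq {s t : Finset (Fin n)} (hts : t ⊆ s) :
    s.powerset.filter (fun w => w ⊆ t) = t.powerset := by
  ext w
  simp only [mem_filter, mem_powerset]
  exact ⟨fun h => h.2, fun h => ⟨h.trans hts, h⟩⟩

lemma anfS_inv (f : BF n) (s : Finset (Fin n)) :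
    ∑ t ∈ s.powerset, anfS f t = f (indF s) := by
  unfold anfS
  have step1 : ∀ t ∈ s.powerset,
      ∑ w ∈ t.powerset, f (indF w) = ∑ w ∈ s.powerset, if w ⊆ t then f (indF w) else 0 := by
    intro t ht
    rw [← Finset.sum_filter, powerset_filter_eq (mem_powerset.1 ht)]
  rw [Finset.sum_congr rfl step1, Finset.sum_comm]
  have step2 : ∀ w ∈ s.powerset,
      (∑ t ∈ s.powerset, if w ⊆ t then f (indF w) else 0) = if w = s then f (indF w) else 0 := by
    intro w hw
    rw [← Finset.sum_filter, Finset.sum_const, nsmul_eq_mul, card_cast (mem_powerset.1 hw)]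
    split_ifs <;> simp
  rw [Finset.sum_congr rfl step2, Finset.sum_ite_eq' s.powerset s (fun w => f (indF w)),
    if_pos (mem_powerset.2 Finset.Subset.rfl)]

lemma exists_anfS_ne (f : BF n) (hf : f ≠ 0) : ∃ s, anfS f s ≠ 0 := by
  by_contra hall
  push_neg at hall
  apply hf
  funext x
  have := anfS_inv f (suppF x)
  rw [indF_suppF] at this
  rw [← this]
  simp only [hall]
  simp

lemma le_degree_of_anfS_ne {f : BF n} {s : Finset (Fin n)} (h : anfS f s ≠ 0) :
    s.card ≤ degree f := by
  have : anf f (indF s) ≠ 0 := by rw [anf_eq_anfS, suppF_indF]; exact h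
  have hmem : indF s ∈ Finset.univ.filter (fun a => anf f a ≠ 0) := by
    simp only [mem_filter, mem_univ, true_and]; exact this
  have := Finset.le_sup (f := wt) hmem
  rwa [wt_indF] at this

lemma degree_le_of_anfS {f : BF n} {D : ℕ} (H : ∀ s, anfS f s ≠ 0 → s.card ≤ D) :
    degree f ≤ D := by
  apply Finset.sup_le
  intro a ha
  simp only [mem_filter, mem_univ, true_and] at ha
  rw [anf_eq_anfS] at ha
  exact H _ ha

lemma anfS_mul_ne {f g : BF n} {s : Finset (Fin n)}
    (h : anfS (fun x => f x * g x) s ≠ 0) :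
    ∃ t t', anfS f t ≠ 0 ∧ anfS g t' ≠ 0 ∧ t ∪ t' = s := by
  have expand : anfS (fun x => f x * g x) s
      = ∑ t ∈ s.powerset, ∑ t' ∈ s.powerset,
          (if t ∪ t' = s then 1 else 0) * (anfS f t * anfS g t') := by
    unfold anfS
    have e1 : ∀ u ∈ s.powerset,
        f (indF u) * g (indF u)
          = ∑ t ∈ s.powerset, ∑ t' ∈ s.powerset,
              if t ⊆ u ∧ t' ⊆ u then anfS f t * anfS g t' else 0 := by
      intro u hu
      have hf : f (indF u) = ∑ t ∈ s.powerset, if t ⊆ u then anfS f t else 0 := by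
        rw [← Finset.sum_filter, powerset_filter_eq (mem_powerset.1 hu), anfS_inv]
      have hg : g (indF u) = ∑ t ∈ s.powerset, if t ⊆ u then anfS g t else 0 := by
        rw [← Finset.sum_filter, powerset_filter_eq (mem_powerset.1 hu), anfS_inv]
      rw [hf, hg, Finset.sum_mul_sum]
      refine Finset.sum_congr rfl fun t _ => Finset.sum_congr rfl fun t' _ => ?_
      split_ifs with h1 h2 h3 h4 h5 <;> simp_all
    rw [Finset.sum_congr rfl e1, Finset.sum_comm]
    refine Finset.sum_congr rfl fun t ht => ?_
    rw [Finset.sum_comm]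
    refine Finset.sum_congr rfl fun t' ht' => ?_
    have : ∀ u ∈ s.powerset, (if t ⊆ u ∧ t' ⊆ u then anfS f t * anfS g t' else 0)
        = if t ∪ t' ⊆ u then anfS f t * anfS g t' else 0 := by
      intro u _
      simp [Finset.union_subset_iff]
    rw [Finset.sum_congr rfl this, ← Finset.sum_filter, Finset.sum_const, nsmul_eq_mul,
      card_cast (Finset.union_subset (mem_powerset.1 ht) (mem_powerset.1 ht'))]
    rfl
  rw [expand] at h
  obtain ⟨t, _, h⟩ := Finset.exists_ne_zero_of_sum_ne_zero h
  obtain ⟨t', _, h⟩ := Finset.exists_ne_zero_of_sum_ne_zero h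
  by_cases hc : t ∪ t' = s
  · refine ⟨t, t', ?_, ?_, hc⟩ <;> intro h0 <;> rw [hc] at h <;> simp [h0] at h
  · rw [if_neg hc] at h; simp at h

lemma degree_mul_le (f g : BF n) : degree (fun x => f x * g x) ≤ degree f + degree g := by
  apply degree_le_of_anfS
  intro s hs
  obtain ⟨t, t', hf, hg, hu⟩ := anfS_mul_ne hs
  calc s.card = (t ∪ t').card := by rw [hu]
    _ ≤ t.card + t'.card := Finset.card_union_le t t'
    _ ≤ degree f + degree g :=
        Nat.add_le_add (le_degree_of_anfS_ne hf) (le_degree_of_anfS_ne hg)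

lemma degree_add_le (f g : BF n) :
    degree (fun x => f x + g x) ≤ max (degree f) (degree g) := by
  apply degree_le_of_anfS
  intro s hs
  have : anfS (fun x => f x + g x) s = anfS f s + anfS g s := by
    unfold anfS; rw [← Finset.sum_add_distrib]
  rw [this] at hs
  rcases zmod2_cases (anfS f s) with h1 | h1
  · refine le_trans (le_degree_of_anfS_ne (f := g) (s := s) ?_) (le_max_right _ _)
    intro h0; rw [h1, h0] at hs; simp at hs
  · exact le_trans (le_degree_of_anfS_ne (f := f) (s := s) (by rw [h1]; exact one_ne_zero))
      (le_max_left _ _)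

lemma degree_const_le (c : ZMod 2) : degree (fun _ : Fin n → ZMod 2 => c) ≤ 0 := by
  apply degree_le_of_anfS
  intro s hs
  by_contra hc
  have hne : s ≠ ∅ := fun he => hc (by simp [he])
  apply hs
  unfold anfS
  rw [Finset.sum_const, nsmul_eq_mul, Finset.card_powerset]
  obtain ⟨m, hm⟩ := Nat.exists_eq_succ_of_ne_zero (fun h0 => hne (Finset.card_eq_zero.1 h0))
  rw [hm]
  push_cast
  rw [show ((2:ZMod 2)) = 0 from rfl]
  simp

lemma degree_prod_le (s : Finset (Fin n)) (f : Fin n → BF n) (D : ℕ)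
    (hD : ∀ j ∈ s, degree (f j) ≤ D) :
    degree (fun x => ∏ j ∈ s, f j x) ≤ s.card * D := by
  induction s using Finset.cons_induction with
  | empty =>
    simpa using degree_const_le (n := n) 1
  | cons a s ha ih =>
    have : degree (fun x => f a x * ∏ j ∈ s, f j x)
        ≤ degree (f a) + degree (fun x => ∏ j ∈ s, f j x) := degree_mul_le _ _
    calc degree (fun x => ∏ j ∈ Finset.cons a s ha, f j x)
        = degree (fun x => f a x * ∏ j ∈ s, f j x) := by
          simp only [Finset.prod_cons]
      _ ≤ degree (f a) + degree (fun x => ∏ j ∈ s, f j x) := this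
      _ ≤ D + s.card * D := Nat.add_le_add (hD a (Finset.mem_cons_self a s))
            (ih fun j hj => hD j (Finset.mem_cons_of_mem hj))
      _ = (Finset.cons a s ha).card * D := by rw [Finset.card_cons]; ring


section Join
variable {k : ℕ}

def joinF (x y : Fin k → ZMod 2) : Fin (k + k) → ZMod 2 := Fin.addCases x y

@[simp] lemma joinF_castAdd (x y : Fin k → ZMod 2) (i : Fin k) :
    joinF x y (Fin.castAdd k i) = x i := by
  unfold joinF; exact Fin.addCases_left i

@[simp] lemma joinF_natAdd (x y : Fin k → ZMod 2) (j : Fin k) :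
    joinF x y (Fin.natAdd k j) = y j := by
  unfold joinF; exact Fin.addCases_right j

lemma addNat_eq_natAdd (j : Fin k) : j.addNat k = Fin.natAdd k j := by
  ext; simp [Nat.add_comm]

@[simp] lemma joinF_addNat (x y : Fin k → ZMod 2) (j : Fin k) :
    joinF x y (j.addNat k) = y j := by
  rw [addNat_eq_natAdd, joinF_natAdd]

lemma joinF_split (z : Fin (k + k) → ZMod 2) :
    joinF (fun i => z (Fin.castAdd k i)) (fun j => z (Fin.natAdd k j)) = z := by
  funext i
  refine Fin.addCases (motive := fun i =>
    joinF (fun i => z (Fin.castAdd k i)) (fun j => z (Fin.natAdd k j)) i = z i) ?_ ?_ i <;>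
    intro j
  · rw [joinF_castAdd]
  · rw [joinF_natAdd]

lemma wt_joinF (a b : Fin k → ZMod 2) : wt (joinF a b) = wt a + wt b := by
  unfold wt
  rw [Finset.card_filter, Finset.card_filter, Finset.card_filter, Fin.sum_univ_add]
  congr 1 <;> refine Finset.sum_congr rfl fun i _ => ?_
  · rw [joinF_castAdd]
  · rw [joinF_natAdd]

lemma anf_joinF (g : BF (k + k)) (a b : Fin k → ZMod 2) :
    anf g (joinF a b)
      = ∑ x ∈ Finset.univ.filter (fun x : Fin k → ZMod 2 => ∀ i, a i = 0 → x i = 0),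
          ∑ y ∈ Finset.univ.filter (fun y : Fin k → ZMod 2 => ∀ j, b j = 0 → y j = 0),
            g (joinF x y) := by
  unfold anf
  rw [← Finset.sum_product']
  refine Finset.sum_nbij' (fun z => (fun i => z (Fin.castAdd k i), fun j => z (Fin.natAdd k j)))
    (fun p => joinF p.1 p.2) ?_ ?_ ?_ ?_ ?_
  · intro z hz
    simp only [mem_filter, mem_univ, true_and] at hz
    simp only [Finset.mem_product, mem_filter, mem_univ, true_and]
    constructor
    · intro i h0
      exact hz (Fin.castAdd k i) (by rw [joinF_castAdd]; exact h0)
    · intro j h0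
      exact hz (Fin.natAdd k j) (by rw [joinF_natAdd]; exact h0)
  · intro p hp
    simp only [Finset.mem_product, mem_filter, mem_univ, true_and] at hp
    simp only [mem_filter, mem_univ, true_and]
    intro i h0
    refine Fin.addCases (motive := fun i => joinF a b i = 0 → joinF p.1 p.2 i = 0) ?_ ?_ i h0 <;>
      intro j hj
    · rw [joinF_castAdd] at hj ⊢
      exact hp.1 j hj
    · rw [joinF_natAdd] at hj ⊢
      exact hp.2 j hj
  · intro z _; exact joinF_split z
  · intro p _
    ext i <;> simp
  · intro z _; rw [joinF_split]

end Join


lemma main_lemma {k : ℕ} (ψ : (Fin k → ZMod 2) → (Fin k → ZMod 2))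
    (hψ : ∀ j : Fin k, degree (fun x => ψ x j) ≤ 1)
    (h : BF k) (g : BF (k + k)) (hg : g ≠ 0)
    (hann : ∀ x y, g (joinF x y) * (bfInner (ψ x) y + h x) = 0) :
    ∃ v : BF k, v ≠ 0 ∧ ((∀ x, v x * h x = 0) ∨ (∀ x, v x * (1 + h x) = 0)) ∧
      degree v ≤ degree g := by
  classical
  set d := degree g with hd
  set cS : Finset (Fin k) → BF k := fun s x => anfS (fun y => g (joinF x y)) s with hcS
  -- nonemptiness
  have hne : ∃ s, cS s ≠ 0 := by
    by_contra hall
    push_neg at hall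
    apply hg
    funext z
    have hΦ : (fun y => g (joinF (fun i => z (Fin.castAdd k i)) y)) = 0 := by
      by_contra hΦ
      obtain ⟨s, hs⟩ := exists_anfS_ne _ hΦ
      exact hs (by have := congrFun (hall s) (fun i => z (Fin.castAdd k i)); exact this)
    have := congrFun hΦ (fun j => z (Fin.natAdd k j))
    rw [joinF_split] at this
    exact this
  -- minimal s
  obtain ⟨s₀, hs₀⟩ := hne
  obtain ⟨s, hsmem, hsmin⟩ := Finset.exists_min_image
    (Finset.univ.filter (fun s => cS s ≠ 0)) Finset.card
    ⟨s₀, by simp [hs₀]⟩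
  simp only [mem_filter, mem_univ, true_and] at hsmem
  have hmin : ∀ t, t ⊂ s → cS t = 0 := by
    intro t hts
    by_contra hct
    have := hsmin t (by simp [hct])
    have := Finset.card_lt_card hts
    omega
  -- pointwise vanishing below s
  have hpt : ∀ x : Fin k → ZMod 2, ∀ u, u ⊂ s → g (joinF x (indF u)) = 0 := by
    intro x u hus
    have : g (joinF x (indF u)) = ∑ t ∈ u.powerset, anfS (fun y => g (joinF x y)) t :=
      (anfS_inv (fun y => g (joinF x y)) u).symm
    rw [this]
    refine Finset.sum_eq_zero fun t ht => ?_
    have hts : t ⊂ s := lt_of_le_of_lt (mem_powerset.1 ht) hus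
    have := congrFun (hmin t hts) x
    exact this
  -- cS s x = g (joinF x (indF s))
  have hcs_eq : ∀ x, cS s x = g (joinF x (indF s)) := by
    intro x
    show ∑ u ∈ s.powerset, g (joinF x (indF u)) = g (joinF x (indF s))
    refine Finset.sum_eq_single_of_mem s (mem_powerset_self s) fun u hu hne => ?_
    exact hpt x u (lt_of_le_of_ne (mem_powerset.1 hu) hne)
  -- anfS of cS s
  have hanf : ∀ t, anfS (cS s) t ≠ 0 → t.card + s.card ≤ d := by
    intro t ht
    have key : anfS (cS s) t = anf g (joinF (indF t) (indF s)) := by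
      rw [anf_joinF, sum_dle]
      rw [suppF_indF]
      refine Finset.sum_congr rfl fun w _ => ?_
      show cS s (indF w) = _
      show anfS (fun y => g (joinF (indF w) y)) s = _
      rw [sum_dle, suppF_indF]
      rfl
    rw [key] at ht
    have hmem : joinF (indF t) (indF s) ∈ Finset.univ.filter (fun a => anf g a ≠ 0) := by
      simp only [mem_filter, mem_univ, true_and]; exact ht
    have := Finset.le_sup (f := wt) hmem
    rw [wt_joinF, wt_indF, wt_indF] at this
    exact this
  have hscard : s.card ≤ d := by
    obtain ⟨t₀, ht₀⟩ := exists_anfS_ne _ hsmem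
    have := hanf t₀ ht₀
    omega
  have hdegcs : degree (cS s) ≤ d - s.card := by
    apply degree_le_of_anfS
    intro t ht
    have := hanf t ht
    omega
  -- choose x₀
  have hx₀ : ∃ x₀, cS s x₀ ≠ 0 := by
    by_contra hall
    push_neg at hall
    exact hsmem (funext hall)
  obtain ⟨x₀, hx₀⟩ := hx₀
  set S : Finset (Fin k) := s.filter (fun j => ψ x₀ j ≠ 0) with hS
  set ε : ZMod 2 := ((S.card : ℕ) : ZMod 2) with hε
  set v : BF k := fun x => cS s x * ∏ j ∈ s, (if j ∈ S then ψ x j else 1 + ψ x j) with hv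
  -- v x₀ = 1
  have hvx₀ : v x₀ = cS s x₀ := by
    rw [hv]
    simp only []
    rw [Finset.prod_eq_one, mul_one]
    intro j hj
    by_cases hjS : j ∈ S
    · rw [if_pos hjS]
      have : ψ x₀ j ≠ 0 := (Finset.mem_filter.1 hjS).2
      rcases zmod2_cases (ψ x₀ j) with h0 | h0
      · exact absurd h0 this
      · exact h0
    · rw [if_neg hjS]
      have : ¬ (ψ x₀ j ≠ 0) := fun hne => hjS (Finset.mem_filter.2 ⟨hj, hne⟩)
      push_neg at this
      rw [this, add_zero]
  have hvne : v ≠ 0 := by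
    intro h0
    have := congrFun h0 x₀
    rw [hvx₀] at this
    exact hx₀ this
  -- degree bound
  have hdegv : degree v ≤ d := by
    have h1 : degree v ≤ degree (cS s) +
        degree (fun x => ∏ j ∈ s, (if j ∈ S then ψ x j else 1 + ψ x j)) :=
      degree_mul_le _ _
    have h2 : degree (fun x => ∏ j ∈ s, (if j ∈ S then ψ x j else 1 + ψ x j)) ≤ s.card * 1 := by
      refine degree_prod_le s (fun j => fun x => if j ∈ S then ψ x j else 1 + ψ x j) 1 ?_
      intro j hj
      by_cases hjS : j ∈ S
      · simp only [if_pos hjS]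
        exact hψ j
      · simp only [if_neg hjS]
        refine le_trans (degree_add_le (fun _ => 1) (fun x => ψ x j)) ?_
        simp only [max_le_iff]
        exact ⟨le_trans (degree_const_le 1) (by omega), hψ j⟩
    omega
  -- key vanishing
  have hkey : ∀ x, h x = 1 + ε → v x = 0 := by
    intro x hx
    by_contra hvx
    have hcsx : cS s x ≠ 0 := by
      intro h0; apply hvx; rw [hv]; simp only []; rw [h0, zero_mul]
    have hprod : (∏ j ∈ s, (if j ∈ S then ψ x j else 1 + ψ x j)) ≠ 0 := by
      intro h0; apply hvx; rw [hv]; simp only []; rw [h0, mul_zero]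
    have hfac : ∀ j ∈ s, ψ x j = if j ∈ S then 1 else 0 := by
      intro j hj
      have := Finset.prod_ne_zero_iff.1 hprod j hj
      by_cases hjS : j ∈ S
      · rw [if_pos hjS] at this ⊢
        rcases zmod2_cases (ψ x j) with h0 | h0
        · exact absurd h0 this
        · exact h0
      · rw [if_neg hjS] at this ⊢
        rcases zmod2_cases (ψ x j) with h0 | h0
        · exact h0
        · rw [h0] at this
          exact absurd (by decide : (1 : ZMod 2) + 1 = 0) this
    have hinner : bfInner (ψ x) (indF s) = ε := by
      unfold bfInner indF
      have e1 : ∀ j : Fin k, ψ x j * (if j ∈ s then (1 : ZMod 2) else 0)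
          = if j ∈ s then (if j ∈ S then 1 else 0) else 0 := by
        intro j
        by_cases hj : j ∈ s
        · rw [if_pos hj, if_pos hj, mul_one, hfac j hj]
        · rw [if_neg hj, if_neg hj, mul_zero]
      rw [Finset.sum_congr rfl (fun j _ => e1 j), ← Finset.sum_filter]
      rw [Finset.filter_univ_mem]
      rw [← Finset.sum_filter, Finset.sum_const, nsmul_eq_mul, mul_one]
      have : s.filter (fun j => j ∈ S) = S := by
        ext j
        simp only [Finset.mem_filter, hS]
        tauto
      rw [this, hε]
    -- conclude contradiction
    have := hann x (indF s)
    rw [hinner, hx] at this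
    have heps : ε + (1 + ε) = 1 := by
      rcases zmod2_cases ε with h0 | h0 <;> rw [h0] <;> decide
    rw [heps, mul_one] at this
    rw [hcs_eq x] at hcsx
    exact hcsx this
  -- assemble
  refine ⟨v, hvne, ?_, hdegv⟩
  rcases zmod2_cases ε with h0 | h0
  · left
    intro x
    rcases zmod2_cases (h x) with h1 | h1
    · rw [h1, mul_zero]
    · rw [hkey x (by rw [h1, h0]; decide), zero_mul]
  · right
    intro x
    rcases zmod2_cases (h x) with h1 | h1
    · rw [hkey x (by rw [h1, h0]; decide), zero_mul]
    · rw [h1]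
      rw [show (1 : ZMod 2) + 1 = 0 by decide, mul_zero]

theorem AI_MaioranaMcFarland (k : ℕ) (hk : 2 ≤ k)
    (ψ : (Fin k → ZMod 2) → (Fin k → ZMod 2))
    (hψ : ∀ j : Fin k, degree (fun x => ψ x j) ≤ 1)
    (h : BF k) (F : BF (k + k))
    (hF : ∀ z : Fin (k + k) → ZMod 2,
      F z = bfInner (ψ (fun i => z (Fin.castAdd k i))) (fun j => z (Fin.natAdd k j))
              + h (fun i => z (Fin.castAdd k i))) :
    AI h ≤ AI F := by
  classical
  -- the annihilator set of F is nonempty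
  have hFne : {d | ∃ g : BF (k+k), g ≠ 0 ∧
      ((∀ x, g x * F x = 0) ∨ (∀ x, g x * (1 + F x) = 0)) ∧ degree g = d}.Nonempty := by
    by_cases hc : ∀ z, F z = 1
    · refine ⟨degree (fun _ : Fin (k+k) → ZMod 2 => (1 : ZMod 2)),
        (fun _ => 1), ?_, Or.inr fun z => ?_, rfl⟩
      · intro h0
        have := congrFun h0 (fun _ => 0)
        simp at this
      · show (1 : ZMod 2) * (1 + F z) = 0
        rw [hc z]; decide
    · push_neg at hc
      obtain ⟨z₀, hz₀⟩ := hc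
      refine ⟨degree (fun z => 1 + F z), (fun z => 1 + F z), ?_, Or.inl fun z => ?_, rfl⟩
      · intro h0
        have := congrFun h0 z₀
        simp only [Pi.zero_apply] at this
        rcases zmod2_cases (F z₀) with h1 | h1
        · rw [h1] at this; exact absurd this (by decide)
        · exact hz₀ h1
      · show (1 + F z) * F z = 0
        have : ∀ a : ZMod 2, (1 + a) * a = 0 := by decide
        exact this (F z)
  obtain ⟨g, hg0, hgann, hgdeg⟩ := Nat.sInf_mem hFne
  have hFxy : ∀ x y, F (joinF x y) = bfInner (ψ x) y + h x := by
    intro x y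
    rw [hF (joinF x y),
      show (fun i => joinF x y (Fin.castAdd k i)) = x from funext fun i => joinF_castAdd x y i,
      show (fun j => joinF x y (Fin.natAdd k j)) = y from funext fun j => joinF_natAdd x y j]
  have key : ∃ v : BF k, v ≠ 0 ∧ ((∀ x, v x * h x = 0) ∨ (∀ x, v x * (1 + h x) = 0)) ∧
      degree v ≤ degree g := by
    rcases hgann with hgann | hgann
    · refine main_lemma ψ hψ h g hg0 fun x y => ?_
      rw [← hFxy]
      exact hgann _
    · obtain ⟨v, hv0, hvor, hvdeg⟩ := main_lemma ψ hψ (fun x => 1 + h x) g hg0 (fun x y => by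
        have e : bfInner (ψ x) y + (1 + h x) = 1 + F (joinF x y) := by
          rw [hFxy]; ring
        rw [e]
        exact hgann _)
      refine ⟨v, hv0, ?_, hvdeg⟩
      rcases hvor with hvor | hvor
      · exact Or.inr hvor
      · left
        intro x
        have e : (1 : ZMod 2) + (1 + h x) = h x := by
          rcases zmod2_cases (h x) with h1 | h1 <;> rw [h1] <;> decide
        have := hvor x
        rwa [e] at this
  obtain ⟨v, hv0, hvor, hvdeg⟩ := key
  have hmemv : degree v ∈ {d | ∃ g' : BF k, g' ≠ 0 ∧
      ((∀ x, g' x * h x = 0) ∨ (∀ x, g' x * (1 + h x) = 0)) ∧ degree g' = d} :=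
    ⟨v, hv0, hvor, rfl⟩
  have h1 : AI h ≤ degree v := Nat.sInf_le hmemv
  exact h1.trans (hvdeg.trans (le_of_eq hgdeg))
end

section
/- For any positive integer n, the majority function Maj_n on n variables (which outputs 1 iff the input weight exceeds ⌊n/2⌋) has algebraic immunity exactly ⌈n/2⌉, the maximum possible for an n-variable function. -/
open Finset

def maj (n : ℕ) : BF n := fun x => if n / 2 < wt x then 1 else 0

namespace AIP
variable {n : ℕ}

def toS (x : Fin n → ZMod 2) : Finset (Fin n) := univ.filter (fun i => x i ≠ 0)
def ofS (S : Finset (Fin n)) : Fin n → ZMod 2 := fun i => if i ∈ S then 1 else 0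

lemma zmod2 (a : ZMod 2) : a = 0 ∨ a = 1 := by revert a; decide

lemma mem_toS {x : Fin n → ZMod 2} {i : Fin n} : i ∈ toS x ↔ x i ≠ 0 := by
  simp [toS]

lemma ofS_toS (x : Fin n → ZMod 2) : ofS (toS x) = x := by
  funext i
  rcases zmod2 (x i) with h | h <;> simp [ofS, mem_toS, h]

lemma toS_ofS (S : Finset (Fin n)) : toS (ofS S) = S := by
  ext i
  by_cases h : i ∈ S <;> simp [mem_toS, ofS, h]

lemma wt_eq (x : Fin n → ZMod 2) : wt x = (toS x).card := rfl

def mob (F : Finset (Fin n) → ZMod 2) (S : Finset (Fin n)) : ZMod 2 :=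
  ∑ T ∈ S.powerset, F T

lemma mob_sub (F G : Finset (Fin n) → ZMod 2) (S : Finset (Fin n)) :
    mob (F - G) S = mob F S - mob G S := by
  simp [mob, Finset.sum_sub_distrib]

lemma card_filter_superset (A U : Finset (Fin n)) (h : U ⊆ A) :
    (A.powerset.filter (fun T => U ⊆ T)).card = 2 ^ (A \ U).card := by
  rw [← Finset.card_powerset]
  apply Finset.card_nbij' (fun T => T \ U) (fun T => T ∪ U)
  · intro T hT
    simp only [Finset.mem_coe, mem_filter, mem_powerset] at hT ⊢
    exact Finset.sdiff_subset_sdiff hT.1 (Finset.Subset.refl U)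
  · intro T hT
    simp only [Finset.mem_coe, mem_powerset, Finset.subset_sdiff] at hT
    simp only [Finset.mem_coe, mem_filter, mem_powerset]
    exact ⟨Finset.union_subset hT.1 h, Finset.subset_union_right⟩
  · intro T hT
    simp only [Finset.mem_coe, mem_filter, mem_powerset] at hT
    exact Finset.sdiff_union_of_subset hT.2
  · intro T hT
    simp only [Finset.mem_coe, mem_powerset, Finset.subset_sdiff] at hT
    exact Finset.union_sdiff_cancel_right hT.2

lemma two_pow_zmod (k : ℕ) : ((2 ^ k : ℕ) : ZMod 2) = if k = 0 then 1 else 0 := by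
  have h2 : ((2:ℕ) : ZMod 2) = 0 := by decide
  cases k with
  | zero => simp
  | succ m => push_cast [h2]; simp; decide

lemma mob_mob (F : Finset (Fin n) → ZMod 2) (A : Finset (Fin n)) :
    mob (mob F) A = F A := by
  unfold mob
  have h1 : ∀ T ∈ A.powerset, ∑ U ∈ T.powerset, F U
      = ∑ U ∈ A.powerset, if U ⊆ T then F U else 0 := by
    intro T hT
    rw [← Finset.sum_filter]
    congr 1
    ext U
    simp only [mem_filter, mem_powerset] at hT ⊢
    exact ⟨fun hu => ⟨hu.trans hT, hu⟩, fun hu => hu.2⟩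
  rw [Finset.sum_congr rfl h1, Finset.sum_comm]
  have h2 : ∀ U ∈ A.powerset,
      (∑ T ∈ A.powerset, if U ⊆ T then F U else 0) = if U = A then F U else 0 := by
    intro U hU
    rw [mem_powerset] at hU
    rw [← Finset.sum_filter, Finset.sum_const, card_filter_superset A U hU]
    rw [nsmul_eq_mul, two_pow_zmod]
    rcases eq_or_ne U A with rfl | hne
    · simp
    · rw [if_neg, if_neg hne, zero_mul]
      intro hc
      exact hne (Finset.Subset.antisymm hU (Finset.sdiff_eq_empty_iff_subset.mp
        (Finset.card_eq_zero.mp hc)))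
  rw [Finset.sum_congr rfl h2]
  simp [Finset.sum_ite_eq' A.powerset A F, Finset.mem_powerset_self]

lemma anf_eq (f : BF n) (a : Fin n → ZMod 2) :
    anf f a = mob (fun S => f (ofS S)) (toS a) := by
  unfold anf mob
  apply Finset.sum_nbij' toS ofS
  · intro x hx
    simp only [mem_filter, mem_univ, true_and] at hx
    rw [mem_powerset]
    intro i hi
    rw [mem_toS] at hi ⊢
    intro ha
    exact hi (hx i ha)
  · intro S hS
    rw [mem_powerset] at hS
    simp only [mem_filter, mem_univ, true_and]
    intro i ha
    rcases zmod2 (ofS S i) with h | h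
    · exact h
    · exfalso
      have : i ∈ S := by
        by_contra hc
        simp [ofS, hc] at h
      have : i ∈ toS a := hS this
      rw [mem_toS] at this
      exact this ha
  · intro x _; exact ofS_toS x
  · intro S _; exact toS_ofS S
  · intro x _; rw [ofS_toS]

lemma anf_ofMob (G : Finset (Fin n) → ZMod 2) (a : Fin n → ZMod 2) :
    anf (fun x => mob G (toS x)) a = G (toS a) := by
  rw [anf_eq]
  have : (fun S => mob G (toS (ofS S))) = mob G := by
    funext S; rw [toS_ofS]
  rw [this, mob_mob]

lemma exists_anf_ne {g : BF n} (h : g ≠ 0) : ∃ a, anf g a ≠ 0 := by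
  by_contra hc
  push_neg at hc
  apply h
  funext x
  have key : ∀ T : Finset (Fin n), mob (fun S => g (ofS S)) T = 0 := by
    intro T
    have := hc (ofS T)
    rwa [anf_eq, toS_ofS] at this
  have h2 := mob_mob (fun S => g (ofS S)) (toS x)
  rw [ofS_toS] at h2
  have h3 : mob (mob (fun S => g (ofS S))) (toS x) = 0 :=
    Finset.sum_eq_zero (fun T _ => key T)
  rw [Pi.zero_apply, ← h2, h3]

lemma le_degree {g : BF n} {a : Fin n → ZMod 2} (h : anf g a ≠ 0) : wt a ≤ degree g :=
  Finset.le_sup (by simp [h])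

def flp (x : Fin n → ZMod 2) : Fin n → ZMod 2 := fun i => 1 + x i

lemma flp_flp (x : Fin n → ZMod 2) : flp (flp x) = x := by
  funext i
  show 1 + (1 + x i) = x i
  rw [← add_assoc]
  norm_num
  decide

lemma flp_ofS (S : Finset (Fin n)) : flp (ofS S) = ofS Sᶜ := by
  funext i
  by_cases h : i ∈ S <;> simp [flp, ofS, h] <;> decide

lemma toS_flp (x : Fin n → ZMod 2) : toS (flp x) = (toS x)ᶜ := by
  ext i
  rcases zmod2 (x i) with h | h <;>
    simp [mem_toS, Finset.mem_compl, flp, h] <;> decide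

lemma wt_flp (x : Fin n → ZMod 2) : wt (flp x) = n - wt x := by
  rw [wt_eq, wt_eq, toS_flp, Finset.card_compl, Fintype.card_fin]

lemma wt_le (x : Fin n → ZMod 2) : wt x ≤ n := by
  rw [wt_eq]
  simpa using Finset.card_le_card (Finset.subset_univ (toS x))

lemma mob_compl (F : Finset (Fin n) → ZMod 2) (A : Finset (Fin n)) :
    mob (fun S => F Sᶜ) A = ∑ U ∈ univ.filter (fun U => A ⊆ U), mob F U := by
  have hF : ∀ T : Finset (Fin n), F Tᶜ = ∑ U ∈ univ, if Disjoint T U then mob F U else 0 := by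
    intro T
    rw [← mob_mob F Tᶜ]
    unfold mob
    rw [← Finset.sum_filter]
    congr 1
    ext U
    simp only [mem_filter, mem_univ, true_and, mem_powerset]
    rw [show (U ⊆ Tᶜ) = (U ≤ Tᶜ) from rfl, le_compl_iff_disjoint_right, disjoint_comm]
  calc mob (fun S => F Sᶜ) A
      = ∑ T ∈ A.powerset, ∑ U ∈ univ, if Disjoint T U then mob F U else 0 := by
        unfold mob
        exact Finset.sum_congr rfl (fun T _ => hF T)
    _ = ∑ U ∈ univ, ∑ T ∈ A.powerset, if Disjoint T U then mob F U else 0 :=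
        Finset.sum_comm
    _ = ∑ U ∈ univ, if A ⊆ U then mob F U else 0 := by
        apply Finset.sum_congr rfl
        intro U _
        rw [← Finset.sum_filter]
        have hfil : A.powerset.filter (fun T => Disjoint T U) = (A \ U).powerset := by
          ext T
          simp only [mem_filter, mem_powerset, Finset.subset_sdiff]
        rw [hfil, Finset.sum_const, Finset.card_powerset, nsmul_eq_mul, two_pow_zmod]
        rcases eq_or_ne ((A \ U).card) 0 with hc | hc
        · rw [if_pos hc, if_pos, one_mul]
          exact Finset.sdiff_eq_empty_iff_subset.mp (Finset.card_eq_zero.mp hc)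
        · rw [if_neg hc, if_neg, zero_mul]
          intro hAU
          exact hc (by rw [Finset.sdiff_eq_empty_iff_subset.mpr hAU, Finset.card_empty])
    _ = ∑ U ∈ univ.filter (fun U => A ⊆ U), mob F U := by
        rw [Finset.sum_filter]

lemma anf_flp (g : BF n) (a : Fin n → ZMod 2) :
    anf (fun x => g (flp x)) a
      = ∑ U ∈ univ.filter (fun U => toS a ⊆ U), mob (fun S => g (ofS S)) U := by
  rw [anf_eq]
  simp only [flp_ofS]
  exact mob_compl (fun T => g (ofS T)) (toS a)

lemma le_degree_of_anf_flp {g : BF n} {a : Fin n → ZMod 2}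
    (h : anf (fun x => g (flp x)) a ≠ 0) : wt a ≤ degree g := by
  rw [anf_flp] at h
  obtain ⟨U, hU, hne⟩ := Finset.exists_ne_zero_of_sum_ne_zero h
  simp only [mem_filter, mem_univ, true_and] at hU
  have h1 : anf g (ofS U) ≠ 0 := by
    rw [anf_eq, toS_ofS]; exact hne
  have h2 := le_degree h1
  have h3 : wt a ≤ wt (ofS U) := by
    rw [wt_eq, wt_eq, toS_ofS]
    exact Finset.card_le_card hU
  omega

lemma anf_eq_zero_of_vanish {g : BF n} {k : ℕ}
    (h : ∀ x, wt x ≤ k → g x = 0) {a : Fin n → ZMod 2} (ha : wt a ≤ k) :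
    anf g a = 0 := by
  unfold anf
  apply Finset.sum_eq_zero
  intro x hx
  simp only [mem_filter, mem_univ, true_and] at hx
  apply h
  have hsub : toS x ⊆ toS a := by
    intro i hi; rw [mem_toS] at hi ⊢; exact fun h0 => hi (hx i h0)
  have : wt x ≤ wt a := by rw [wt_eq, wt_eq]; exact Finset.card_le_card hsub
  omega

lemma card_low (n : ℕ) (hn : 0 < n) :
    2 ^ (n - 1) < (univ.filter (fun S : Finset (Fin n) => S.card ≤ (n+1)/2)).card := by
  have htot : (univ.filter (fun S : Finset (Fin n) => S.card ≤ (n+1)/2)).card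
      + (univ.filter (fun S : Finset (Fin n) => ¬ S.card ≤ (n+1)/2)).card = 2 ^ n := by
    rw [Finset.card_filter_add_card_filter_not, Finset.card_univ,
      Fintype.card_finset, Fintype.card_fin]
  obtain ⟨T₀, -, hT₀⟩ := Finset.exists_subset_card_eq
    (show n/2 ≤ (univ : Finset (Fin n)).card by rw [Finset.card_univ, Fintype.card_fin]; omega)
  have hT₀A : T₀ ∈ univ.filter (fun S : Finset (Fin n) => S.card ≤ (n+1)/2) := by
    simp only [mem_filter, mem_univ, true_and, hT₀]; omega
  have hinj : (univ.filter (fun S : Finset (Fin n) => ¬ S.card ≤ (n+1)/2)).card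
      ≤ ((univ.filter (fun S : Finset (Fin n) => S.card ≤ (n+1)/2)).erase T₀).card := by
    apply Finset.card_le_card_of_injOn (fun S => Sᶜ)
    · intro S hS
      simp only [Finset.mem_coe, mem_filter, mem_univ, true_and, not_le] at hS
      have hcard : S.card ≤ n := by
        simpa using Finset.card_le_card (Finset.subset_univ S)
      rw [Finset.mem_coe, Finset.mem_erase]
      beta_reduce
      constructor
      · intro hc
        have hcc : Sᶜ.card = n / 2 := by rw [hc, hT₀]
        rw [Finset.card_compl, Fintype.card_fin] at hcc
        omega
      · simp only [mem_filter, mem_univ, true_and, Finset.card_compl, Fintype.card_fin]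
        omega
    · intro S1 _ S2 _ h
      simpa using congrArg (fun T => Tᶜ) h
  rw [Finset.card_erase_of_mem hT₀A] at hinj
  have h2n : 2 ^ n = 2 * 2 ^ (n - 1) := by
    rw [← pow_succ']
    congr 1; omega
  have hApos : 0 < (univ.filter (fun S : Finset (Fin n) => S.card ≤ (n+1)/2)).card :=
    Finset.card_pos.mpr ⟨T₀, hT₀A⟩
  omega

lemma exists_vanishing (n : ℕ) (Y : Finset (Fin n → ZMod 2))
    (hY : Y.card < (univ.filter (fun S : Finset (Fin n) => S.card ≤ (n+1)/2)).card) :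
    ∃ g : BF n, g ≠ 0 ∧ (∀ x ∈ Y, g x = 0) ∧ degree g ≤ (n+1)/2 := by
  classical
  let ext : ({S : Finset (Fin n) // S.card ≤ (n+1)/2} → ZMod 2) → (Finset (Fin n) → ZMod 2) :=
    fun c S => if h : S.card ≤ (n+1)/2 then c ⟨S, h⟩ else 0
  let Φ : ({S : Finset (Fin n) // S.card ≤ (n+1)/2} → ZMod 2) → ({x // x ∈ Y} → ZMod 2) :=
    fun c y => mob (ext c) (toS y.1)
  have hninj : ¬ Function.Injective Φ := by
    intro hinj
    have hle := Fintype.card_le_of_injective Φ hinj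
    rw [Fintype.card_fun, Fintype.card_fun, Fintype.card_subtype, Fintype.card_coe] at hle
    have hpow := Nat.pow_lt_pow_right (one_lt_two) hY
    have hcz : Fintype.card (ZMod 2) = 2 := rfl
    rw [hcz] at hle
    omega
  rw [Function.not_injective_iff] at hninj
  obtain ⟨c1, c2, heq, hne⟩ := hninj
  have hext_sub : ext (c1 - c2) = ext c1 - ext c2 := by
    funext S
    by_cases h : S.card ≤ (n+1)/2 <;> simp [ext, h]
  refine ⟨fun x => mob (ext (c1 - c2)) (toS x), ?_, ?_, ?_⟩
  · intro h0
    apply hne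
    funext s
    have hgz : ∀ a, anf (fun x => mob (ext (c1 - c2)) (toS x)) a = 0 := by
      intro a
      rw [show (fun x => mob (ext (c1 - c2)) (toS x)) = (0 : BF n) from h0]
      unfold anf
      simp
    have := hgz (ofS s.1)
    rw [anf_ofMob, toS_ofS] at this
    have h2 : ext (c1 - c2) s.1 = c1 s - c2 s := by
      simp [ext, s.2]
    rw [h2] at this
    have := sub_eq_zero.mp this
    exact this
  · intro y hy
    show mob (ext (c1 - c2)) (toS y) = 0
    rw [hext_sub, mob_sub]
    have := congrFun heq ⟨y, hy⟩
    simpa [Φ] using sub_eq_zero.mpr this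
  · apply Finset.sup_le
    intro a ha
    simp only [mem_filter, mem_univ, true_and] at ha
    rw [anf_ofMob] at ha
    by_contra hc
    apply ha
    have : ¬ (toS a).card ≤ (n+1)/2 := by rw [← wt_eq]; omega
    simp [ext, this]

lemma AI_le_aux (n : ℕ) (hn : 0 < n) (f : BF n) :
    ∃ g : BF n, g ≠ 0 ∧ ((∀ x, g x * f x = 0) ∨ (∀ x, g x * (1 + f x) = 0)) ∧
      degree g ≤ (n+1)/2 := by
  have htot : (univ.filter (fun x : Fin n → ZMod 2 => f x ≠ 0)).card
      + (univ.filter (fun x : Fin n → ZMod 2 => ¬ f x ≠ 0)).card = 2 ^ n := by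
    rw [Finset.card_filter_add_card_filter_not, Finset.card_univ,
      Fintype.card_fun, Fintype.card_fin]
    rfl
  have hD := card_low n hn
  have h2n : 2 ^ n = 2 * 2 ^ (n - 1) := by
    rw [← pow_succ']; congr 1; omega
  have hone : (1 : ZMod 2) ≠ 0 := by decide
  have honeone : (1 : ZMod 2) + 1 = 0 := by decide
  rcases le_or_gt (univ.filter (fun x : Fin n → ZMod 2 => f x ≠ 0)).card (2^(n-1)) with hc | hc
  · obtain ⟨g, hg0, hvan, hdeg⟩ := exists_vanishing n _ (lt_of_le_of_lt hc hD)
    refine ⟨g, hg0, Or.inl ?_, hdeg⟩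
    intro x
    rcases zmod2 (f x) with h | h
    · rw [h, mul_zero]
    · rw [hvan x (by simp only [mem_filter, mem_univ, true_and, h]; exact hone), zero_mul]
  · have hc0 : (univ.filter (fun x : Fin n → ZMod 2 => ¬ f x ≠ 0)).card ≤ 2^(n-1) := by omega
    obtain ⟨g, hg0, hvan, hdeg⟩ := exists_vanishing n _ (lt_of_le_of_lt hc0 hD)
    refine ⟨g, hg0, Or.inr ?_, hdeg⟩
    intro x
    rcases zmod2 (f x) with h | h
    · rw [hvan x (by simp only [mem_filter, mem_univ, true_and, h]; simp), zero_mul]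
    · rw [h, honeone, mul_zero]

lemma maj_lower (n : ℕ) (hn : 0 < n) (d : ℕ)
    (hd : ∃ g : BF n, g ≠ 0 ∧
      ((∀ x, g x * maj n x = 0) ∨ (∀ x, g x * (1 + maj n x) = 0)) ∧ degree g = d) :
    (n+1)/2 ≤ d := by
  obtain ⟨g, hg0, hann, hdeg⟩ := hd
  rcases hann with hann | hann
  · set h : BF n := fun x => g (flp x) with hh
    have hvan : ∀ x, wt x ≤ (n+1)/2 - 1 → h x = 0 := by
      intro x hx
      have hw := wt_le (n := n) x
      have hmaj : maj n (flp x) = 1 := by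
        unfold maj
        rw [if_pos]
        rw [wt_flp]
        omega
      have h1 := hann (flp x)
      rw [hmaj, mul_one] at h1
      exact h1
    have hne : h ≠ 0 := by
      intro h0
      apply hg0
      funext x
      have h1 : h (flp x) = 0 := by rw [h0]; rfl
      have h2 : h (flp x) = g x := by rw [hh]; show g (flp (flp x)) = g x; rw [flp_flp]
      rw [Pi.zero_apply, ← h2, h1]
    obtain ⟨a, ha⟩ := exists_anf_ne hne
    have hwa : ¬ wt a ≤ (n+1)/2 - 1 := fun hle => ha (anf_eq_zero_of_vanish hvan hle)
    have hled : wt a ≤ degree g := le_degree_of_anf_flp ha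
    omega
  · have hvan : ∀ x, wt x ≤ n/2 → g x = 0 := by
      intro x hx
      have h1 := hann x
      have hmaj : maj n x = 0 := by
        unfold maj
        rw [if_neg]
        omega
      rw [hmaj, add_zero, mul_one] at h1
      exact h1
    obtain ⟨a, ha⟩ := exists_anf_ne hg0
    have hwa : ¬ wt a ≤ n/2 := fun hle => ha (anf_eq_zero_of_vanish hvan hle)
    have hled := le_degree ha
    omega

end AIP

theorem AI_majority (n : ℕ) (hn : 0 < n) :
    AI (maj n) = (n + 1) / 2 ∧ ∀ f : BF n, AI f ≤ (n + 1) / 2 := by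
  have hup : ∀ f : BF n, AI f ≤ (n+1)/2 := by
    intro f
    obtain ⟨g, hg0, hann, hdeg⟩ := AIP.AI_le_aux n hn f
    exact le_trans (Nat.sInf_le ⟨g, hg0, hann, rfl⟩) hdeg
  refine ⟨le_antisymm (hup (maj n)) ?_, hup⟩
  obtain ⟨g, hg0, hann, -⟩ := AIP.AI_le_aux n hn (maj n)
  have hne : {d | ∃ g : BF n, g ≠ 0 ∧
      ((∀ x, g x * maj n x = 0) ∨ (∀ x, g x * (1 + maj n x) = 0)) ∧
      degree g = d}.Nonempty := ⟨degree g, g, hg0, hann, rfl⟩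
  exact AIP.maj_lower n hn _ (Nat.sInf_mem hne)
end

section
/- For any positive integer n, the algebraic degree of the majority function Maj_n equals 2^{⌊log₂ n⌋}. -/
open Finset

lemma zmod2_ne_zero : ∀ z : ZMod 2, z ≠ 0 ↔ z = 1 := by decide

lemma wt_eq_s8 {n : ℕ} (x : Fin n → ZMod 2) :
    wt x = (Finset.univ.filter (fun i => x i = 1)).card := by
  unfold wt
  congr 1
  apply Finset.filter_congr
  intro i _
  exact zmod2_ne_zero (x i)

lemma anf_maj (n : ℕ) (a : Fin n → ZMod 2) :
    anf (maj n) a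
      = ∑ m ∈ range (wt a + 1), if n / 2 < m then ((wt a).choose m : ZMod 2) else 0 := by
  classical
  set A : Finset (Fin n) := Finset.univ.filter (fun i => a i ≠ 0) with hA
  have hwt : wt a = A.card := rfl
  have step1 : anf (maj n) a = ∑ B ∈ A.powerset, (if n / 2 < B.card then (1 : ZMod 2) else 0) := by
    unfold anf
    refine Finset.sum_nbij' (fun x => Finset.univ.filter (fun i => x i = 1))
      (fun B => fun i => if i ∈ B then 1 else 0) ?_ ?_ ?_ ?_ ?_
    · intro x hx
      simp only [mem_filter, mem_univ, true_and] at hx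
      simp only [mem_powerset]
      intro i hi
      simp only [mem_filter, mem_univ, true_and] at hi
      simp only [hA, mem_filter, mem_univ, true_and]
      intro h0
      rw [hx i h0] at hi
      exact absurd hi (by decide)
    · intro B hB
      simp only [mem_powerset] at hB
      simp only [mem_filter, mem_univ, true_and]
      intro i hi
      rw [if_neg]
      intro hiB
      have := hB hiB
      simp only [hA, mem_filter, mem_univ, true_and] at this
      exact this hi
    · intro x _
      funext i
      simp only [mem_filter, mem_univ, true_and]
      by_cases h : x i = 1
      · rw [if_pos h, h]
      · rw [if_neg h]
        rcases (by decide : ∀ z : ZMod 2, z = 0 ∨ z = 1) (x i) with h0 | h1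
        · exact h0.symm
        · exact absurd h1 h
    · intro B _
      ext i
      simp only [mem_filter, mem_univ, true_and]
      by_cases h : i ∈ B <;> simp [h]
    · intro x _
      show (if n / 2 < wt x then (1 : ZMod 2) else 0) = _
      rw [wt_eq_s8]
  rw [step1, Finset.sum_powerset_apply_card (fun m => if n / 2 < m then (1 : ZMod 2) else 0), hwt]
  refine Finset.sum_congr rfl fun m _ => ?_
  split_ifs with h
  · rw [nsmul_eq_mul, mul_one]
  · rw [smul_zero]

lemma sum_top (n : ℕ) (hn : 0 < n) :
    (∑ m ∈ range (2 ^ Nat.log 2 n + 1),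
      if n / 2 < m then (((2 ^ Nat.log 2 n).choose m : ZMod 2)) else 0) = 1 := by
  set D := 2 ^ Nat.log 2 n with hD
  have hnD : n < 2 * D := by
    have := Nat.lt_pow_succ_log_self (by norm_num : 1 < 2) n
    rw [pow_succ] at this; omega
  rw [Finset.sum_eq_single_of_mem D (by simp)]
  · rw [if_pos (by omega), Nat.choose_self, Nat.cast_one]
  · intro m hm hmD
    rw [mem_range] at hm
    split_ifs with h
    · have hm0 : m ≠ 0 := by omega
      rw [ZMod.natCast_eq_zero_iff]
      exact Nat.Prime.dvd_choose_pow Nat.prime_two hm0 hmD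
    · rfl

lemma sum_high (n k : ℕ) (hk1 : 2 ^ Nat.log 2 n < k) (hk2 : k ≤ n) :
    (∑ m ∈ range (k + 1), if n / 2 < m then ((k.choose m : ZMod 2)) else 0) = 0 := by
  set D := 2 ^ Nat.log 2 n with hD
  have hnD : n < 2 * D := by
    have := Nat.lt_pow_succ_log_self (by norm_num : 1 < 2) n
    rw [pow_succ] at this; omega
  set r := k - D with hr
  have hr0 : 0 < r := by omega
  have hrD : r < D := by omega
  have hrhalf : r ≤ n / 2 := by omega
  have hhalfD : n / 2 < D := by omega
  have hk : k = D + r := by omega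
  have pointwise : ∀ m ∈ range (k + 1),
      (if n / 2 < m then ((k.choose m : ZMod 2)) else 0)
        = if D ≤ m then ((r.choose (m - D) : ZMod 2)) else 0 := by
    intro m hm
    rw [mem_range] at hm
    by_cases hm1 : n / 2 < m
    · rw [if_pos hm1]
      have hvdm : ((k.choose m : ZMod 2))
          = ∑ ij ∈ Finset.HasAntidiagonal.antidiagonal m, ((D.choose ij.1 : ZMod 2)) * ((r.choose ij.2 : ZMod 2)) := by
        rw [hk, Nat.add_choose_eq]
        push_cast
        rfl
      by_cases hmD : D ≤ m
      · rw [if_pos hmD, hvdm]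
        rw [Finset.sum_eq_single (D, m - D)]
        · simp [Nat.choose_self]
        · intro ij hij hne
          rw [Finset.HasAntidiagonal.mem_antidiagonal] at hij
          rcases Nat.eq_zero_or_pos ij.1 with h0 | hpos
          · have : r < ij.2 := by omega
            simp [Nat.choose_eq_zero_of_lt this]
          · have hne1 : ij.1 ≠ D := by
              intro h
              apply hne
              have h2 : ij.2 = m - D := by omega
              exact Prod.ext h h2
            have hz : ((D.choose ij.1 : ZMod 2)) = 0 := by
              rw [ZMod.natCast_eq_zero_iff]
              exact Nat.Prime.dvd_choose_pow Nat.prime_two (by omega) hne1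
            rw [hz, zero_mul]
        · intro h
          exact absurd (Finset.HasAntidiagonal.mem_antidiagonal.2 (by omega)) h
      · rw [if_neg hmD, hvdm]
        apply Finset.sum_eq_zero
        intro ij hij
        rw [Finset.HasAntidiagonal.mem_antidiagonal] at hij
        rcases Nat.eq_zero_or_pos ij.1 with h0 | hpos
        · have : r < ij.2 := by omega
          simp [Nat.choose_eq_zero_of_lt this]
        · have hz : ((D.choose ij.1 : ZMod 2)) = 0 := by
            rw [ZMod.natCast_eq_zero_iff]
            exact Nat.Prime.dvd_choose_pow Nat.prime_two (by omega) (by omega)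
          rw [hz, zero_mul]
    · rw [if_neg hm1, if_neg (by omega)]
  rw [Finset.sum_congr rfl pointwise, Finset.range_eq_Ico,
    ← Finset.sum_Ico_consecutive _ (Nat.zero_le D) (by omega : D ≤ k + 1)]
  have h1 : (∑ m ∈ Finset.Ico 0 D, if D ≤ m then ((r.choose (m - D) : ZMod 2)) else 0) = 0 := by
    apply Finset.sum_eq_zero
    intro m hm
    rw [Finset.mem_Ico] at hm
    rw [if_neg (by omega)]
  rw [h1, zero_add, Finset.sum_Ico_eq_sum_range]
  have h2 : ∀ i ∈ range (k + 1 - D),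
      (if D ≤ D + i then ((r.choose (D + i - D) : ZMod 2)) else 0) = ((r.choose i : ZMod 2)) := by
    intro i _
    rw [if_pos (by omega), Nat.add_sub_cancel_left]
  rw [Finset.sum_congr rfl h2, show k + 1 - D = r + 1 by omega, ← Nat.cast_sum,
    Nat.sum_range_choose, ZMod.natCast_eq_zero_iff]
  exact dvd_pow_self 2 hr0.ne'

theorem degree_majority (n : ℕ) (hn : 0 < n) :
    degree (maj n) = 2 ^ (Nat.log 2 n) := by
  classical
  set D := 2 ^ Nat.log 2 n with hD
  have hDle : D ≤ n := Nat.pow_log_le_self 2 hn.ne'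
  apply le_antisymm
  · apply Finset.sup_le
    intro a ha
    rw [mem_filter] at ha
    by_contra h
    push_neg at h
    have hwle : wt a ≤ n := by
      have := Finset.card_filter_le (Finset.univ : Finset (Fin n)) (fun i => a i ≠ 0)
      simpa [wt] using this
    exact ha.2 (by rw [anf_maj]; exact sum_high n (wt a) h hwle)
  · set a : Fin n → ZMod 2 := fun i => if (i : ℕ) < D then 1 else 0 with ha
    have hwa : wt a = D := by
      unfold wt
      have hset : (Finset.univ.filter (fun i : Fin n => a i ≠ 0))
          = (Finset.range D).attachFin (fun m hm => lt_of_lt_of_le (Finset.mem_range.1 hm) hDle) := by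
        ext i
        simp only [mem_filter, mem_univ, true_and, Finset.mem_attachFin, Finset.mem_range, ha]
        by_cases h : (i : ℕ) < D <;> simp [h]
      rw [hset, Finset.card_attachFin, Finset.card_range]
    have hne : anf (maj n) a ≠ 0 := by
      rw [anf_maj, hwa, hD, sum_top n hn]
      exact one_ne_zero
    calc D = wt a := hwa.symm
      _ ≤ _ := Finset.le_sup (Finset.mem_filter.2 ⟨Finset.mem_univ _, hne⟩)
end

section
/- The 5-variable function f₅(X₁,X₂,Z₁,Z₂,Z₃) = Z₁ ⊕ Z₂ ⊕ X₁(Z₁⊕Z₃) ⊕ X₂(Z₂⊕Z₃) ⊕ X₁X₂(Z₁⊕Z₂⊕Z₃) is 1-resilient, i.e., W_{f₅}(α) = 0 for all α ∈ F₂⁵ with wt(α) ≤ 1. -/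
open Finset

def f5 : BF 5 := fun x =>
  x 2 + x 3 + x 0 * (x 2 + x 4) + x 1 * (x 3 + x 4) + x 0 * x 1 * (x 2 + x 3 + x 4)

theorem f5_one_resilient : resilient 1 f5 := by
  show ∀ a, wt a ≤ 1 → walsh f5 a = 0
  decide
end

section
/- The 5-variable function f₅(X₁,X₂,Z₁,Z₂,Z₃) = Z₁ ⊕ Z₂ ⊕ X₁(Z₁⊕Z₃) ⊕ X₂(Z₂⊕Z₃) ⊕ X₁X₂(Z₁⊕Z₂⊕Z₃) has nonlinearity 12 and algebraic degree 3. -/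
open Finset

theorem f5_nl_and_degree : nl f5 = 12 ∧ degree f5 = 3 := by
  constructor
  · apply le_antisymm
    · apply Nat.sInf_le
      exact ⟨![0,0,0,1,1], 0, by decide⟩
    · apply le_csInf
      · exact ⟨_, 0, 0, rfl⟩
      rintro d ⟨a, c, rfl⟩
      revert a c
      decide
  · decide
end

section
/- The 5-variable function f₅(X₁,X₂,Z₁,Z₂,Z₃) = Z₁ ⊕ Z₂ ⊕ X₁(Z₁⊕Z₃) ⊕ X₂(Z₂⊕Z₃) ⊕ X₁X₂(Z₁⊕Z₂⊕Z₃) has algebraic immunity exactly 2; in particular g = Z₁X₁ ⊕ Z₁ ⊕ Z₂X₂ ⊕ Z₂ ⊕ Z₃X₁ ⊕ Z₃X₂ ⊕ X₁X₂ ⊕ 1 is a nonzero annihilator of f₅ of degree 2, and neither f₅ nor 1⊕f₅ has a nonzero annihilator of degree 1. -/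
open Finset

def gAnn : BF 5 := fun x =>
  x 2 * x 0 + x 2 + x 3 * x 1 + x 3 + x 4 * x 0 + x 4 * x 1 + x 0 * x 1 + 1

/-! ### Auxiliary material -/

def eVec (i : Fin 5) : Fin 5 → ZMod 2 := fun j => if j = i then 1 else 0

set_option maxRecDepth 100000 in
lemma coeff_lemma : ∀ x y : Fin 5 → ZMod 2,
    (∑ a ∈ Finset.univ.filter (fun a : Fin 5 → ZMod 2 => ∀ i, x i = 0 → a i = 0),
      (if (∀ i, a i = 0 → y i = 0) then (1 : ZMod 2) else 0)) = if y = x then 1 else 0 := by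
  decide

lemma inv5 (p : BF 5) (x : Fin 5 → ZMod 2) :
    (∑ a ∈ Finset.univ.filter (fun a : Fin 5 → ZMod 2 => ∀ i, x i = 0 → a i = 0),
      anf p a) = p x := by
  unfold anf
  have h1 : ∀ a : Fin 5 → ZMod 2,
      (∑ y ∈ Finset.univ.filter (fun y : Fin 5 → ZMod 2 => ∀ i, a i = 0 → y i = 0), p y)
      = ∑ y : Fin 5 → ZMod 2,
          (if (∀ i, a i = 0 → y i = 0) then (1:ZMod 2) else 0) * p y := by
    intro a
    rw [Finset.sum_filter]
    congr 1; funext y; split <;> simp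
  simp_rw [h1]
  rw [Finset.sum_comm]
  have h2 : ∀ y : Fin 5 → ZMod 2,
      (∑ a ∈ Finset.univ.filter (fun a : Fin 5 → ZMod 2 => ∀ i, x i = 0 → a i = 0),
        (if (∀ i, a i = 0 → y i = 0) then (1:ZMod 2) else 0) * p y)
      = (if y = x then 1 else 0) * p y := by
    intro y
    rw [← Finset.sum_mul, coeff_lemma x y]
  simp_rw [h2]
  simp

lemma wt_ge_two : ∀ a : Fin 5 → ZMod 2, a ≠ 0 → (∀ i, a ≠ eVec i) → 2 ≤ wt a := by
  decide

lemma zmod2_cases_s12 : ∀ c : ZMod 2, c = 0 ∨ c = 1 := by decide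

set_option maxHeartbeats 2000000 in
lemma affine_of_deg_le_one (p : BF 5) (hdeg : degree p ≤ 1) (x : Fin 5 → ZMod 2) :
    p x = anf p 0 + ∑ i, anf p (eVec i) * x i := by
  have hz : ∀ a : Fin 5 → ZMod 2, 2 ≤ wt a → anf p a = 0 := by
    intro a ha
    by_contra h
    have : wt a ≤ degree p := Finset.le_sup (by simp [h])
    omega
  rw [← inv5 p x]
  rw [Finset.sum_filter]
  set F : (Fin 5 → ZMod 2) → ZMod 2 :=
    fun a => if (∀ i, x i = 0 → a i = 0) then anf p a else 0 with hF
  have hT : (∑ a : Fin 5 → ZMod 2, F a)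
      = ∑ a ∈ insert (0 : Fin 5 → ZMod 2) (Finset.image eVec Finset.univ), F a := by
    refine (Finset.sum_subset (Finset.subset_univ _) ?_).symm
    intro a _ ha
    have ha0 : a ≠ 0 := by rintro rfl; exact ha (by simp)
    have hae : ∀ i, a ≠ eVec i := by
      intro i hi
      exact ha (hi ▸ Finset.mem_insert_of_mem (Finset.mem_image_of_mem eVec (Finset.mem_univ i)))
    simp only [hF]
    rw [hz a (wt_ge_two a ha0 hae)]
    simp
  rw [hT]
  have h0 : (0 : Fin 5 → ZMod 2) ∉ Finset.image eVec Finset.univ := by decide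
  rw [Finset.sum_insert h0]
  have hinj : ∀ i ∈ (Finset.univ : Finset (Fin 5)), ∀ j ∈ Finset.univ, eVec i = eVec j → i = j := by
    intro i _ j _ h
    by_contra hne
    have := congrFun h i
    simp [eVec, hne] at this
  rw [Finset.sum_image hinj]
  have e0 : F 0 = anf p 0 := by
    simp only [hF]
    rw [if_pos]
    intro i _
    rfl
  have ei : ∀ i : Fin 5, F (eVec i) = anf p (eVec i) * x i := by
    intro i
    simp only [hF]
    rcases zmod2_cases_s12 (x i) with hx | hx
    · rw [if_neg, hx, mul_zero]
      intro hcond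
      have h2 := hcond i hx
      simp [eVec] at h2
    · rw [if_pos, hx, mul_one]
      intro j hj
      have hne : j ≠ i := by rintro rfl; rw [hj] at hx; exact absurd hx (by decide)
      simp [eVec, hne]
  rw [e0]
  exact congrArg (anf p 0 + ·) (Finset.sum_congr rfl fun i _ => ei i)

lemma K : ∀ (c : ZMod 2) (v : Fin 5 → ZMod 2),
    ((∀ x : Fin 5 → ZMod 2, (c + ∑ i, v i * x i) * f5 x = 0) ∨
     (∀ x : Fin 5 → ZMod 2, (c + ∑ i, v i * x i) * (1 + f5 x) = 0)) →
    ∀ x : Fin 5 → ZMod 2, (c + ∑ i, v i * x i) = 0 := by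
  decide

lemma no_low (p : BF 5) (hp : p ≠ 0) (hd : degree p ≤ 1) :
    ¬ ((∀ x, p x * f5 x = 0) ∨ (∀ x, p x * (1 + f5 x) = 0)) := by
  intro h
  have haff := affine_of_deg_le_one p hd
  have hzero : ∀ x, p x = 0 := by
    intro x
    rw [haff x]
    apply K (anf p 0) (fun i => anf p (eVec i))
    rcases h with h | h
    · left; intro y; rw [← haff y]; exact h y
    · right; intro y; rw [← haff y]; exact h y
  exact hp (funext hzero)

lemma gAnn_ne : gAnn ≠ 0 := by
  intro h
  have := congrFun h (fun _ => 0)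
  revert this
  decide

lemma gAnn_ann : ∀ x, gAnn x * f5 x = 0 := by decide

lemma gAnn_deg : degree gAnn = 2 := by decide

theorem f5_AI_two :
    AI f5 = 2 ∧ gAnn ≠ 0 ∧ (∀ x, gAnn x * f5 x = 0) ∧ degree gAnn = 2 ∧
      (∀ p : BF 5, p ≠ 0 → degree p = 1 →
        ¬ (∀ x, p x * f5 x = 0) ∧ ¬ (∀ x, p x * (1 + f5 x) = 0)) := by
  have h2mem : 2 ∈ {d | ∃ g : BF 5, g ≠ 0 ∧
      ((∀ x, g x * f5 x = 0) ∨ (∀ x, g x * (1 + f5 x) = 0)) ∧ degree g = d} :=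
    ⟨gAnn, gAnn_ne, Or.inl gAnn_ann, gAnn_deg⟩
  have hAI : AI f5 = 2 := by
    have hub : AI f5 ≤ 2 := Nat.sInf_le h2mem
    have hmem : AI f5 ∈ {d | ∃ g : BF 5, g ≠ 0 ∧
        ((∀ x, g x * f5 x = 0) ∨ (∀ x, g x * (1 + f5 x) = 0)) ∧ degree g = d} :=
      Nat.sInf_mem ⟨2, h2mem⟩
    obtain ⟨g, hg0, hgann, hgdeg⟩ := hmem
    have hge : 2 ≤ AI f5 := by
      by_contra h
      push_neg at h
      exact no_low g hg0 (by omega) hgann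
    omega
  refine ⟨hAI, gAnn_ne, gAnn_ann, gAnn_deg, ?_⟩
  intro p hp hdp
  have h := no_low p hp (le_of_eq hdp)
  exact ⟨fun h1 => h (Or.inl h1), fun h1 => h (Or.inr h1)⟩
end

section
/- Let g, h be n-variable m-resilient Boolean functions and define H(X₁,…,X_{n+3}) = X_{n+3} ⊕ X_{n+1} ⊕ (1 ⊕ X_{n+3} ⊕ X_{n+2})g(X₁,…,Xₙ) ⊕ (X_{n+3} ⊕ X_{n+2})h(X₁,…,Xₙ). Then H is an (n+3)-variable (m+2)-resilient function. -/
open Finset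

def chi (u : ZMod 2) : ℤ := (-1) ^ u.val

lemma two_cases (u : ZMod 2) : u = 0 ∨ u = 1 := by revert u; decide

lemma ysum_eq (b1 b2 b3 G K S : ZMod 2) :
    (∑ y1 : ZMod 2, ∑ y2 : ZMod 2, ∑ y3 : ZMod 2,
      chi (y3 + y1 + (1 + y3 + y2) * G + (y3 + y2) * K + (S + b1*y1 + b2*y2 + b3*y3)))
    = (1 - chi b1) * ((1 - chi (b2 + b3)) * chi (G + S) + (chi b2 - chi b3) * chi (K + S)) := by
  revert b1 b2 b3 G K S; decide

def paste {n : ℕ} (x : Fin n → ZMod 2) (y1 y2 y3 : ZMod 2) : Fin (n+3) → ZMod 2 :=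
  fun j => if h : (j : ℕ) < n then x ⟨j, h⟩ else if (j : ℕ) = n then y1
    else if (j : ℕ) = n + 1 then y2 else y3

lemma E_lt_i {n : ℕ} (i : Fin n) : (i : ℕ) < n + 3 := by omega

lemma E_lt_0 (n : ℕ) : n < n + 3 := by omega

lemma E_lt_1 (n : ℕ) : n + 1 < n + 3 := by omega

lemma E_lt_2 (n : ℕ) : n + 2 < n + 3 := by omega

def E (n : ℕ) : ((Fin n → ZMod 2) × ZMod 2 × ZMod 2 × ZMod 2) ≃ (Fin (n+3) → ZMod 2) where
  toFun p := paste p.1 p.2.1 p.2.2.1 p.2.2.2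
  invFun v := (fun i => v ⟨i, E_lt_i i⟩, v ⟨n, E_lt_0 n⟩, v ⟨n+1, E_lt_1 n⟩, v ⟨n+2, E_lt_2 n⟩)
  left_inv p := by
    obtain ⟨x, y1, y2, y3⟩ := p
    simp only [paste]
    refine Prod.ext ?_ (Prod.ext ?_ (Prod.ext ?_ ?_)) <;> simp
  right_inv v := by
    funext j
    simp only [paste]
    split_ifs with h1 h2 h3
    · exact congrArg v (Fin.ext rfl)
    · exact congrArg v (Fin.ext h2.symm)
    · exact congrArg v (Fin.ext h3.symm)
    · exact congrArg v (Fin.ext (by have := j.isLt; simp; omega))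

lemma paste_lt {n : ℕ} (x : Fin n → ZMod 2) (y1 y2 y3 : ZMod 2) (i : Fin n)
    (hp : (i : ℕ) < n + 3) : paste x y1 y2 y3 ⟨i, hp⟩ = x i := by
  simp only [paste, dif_pos i.isLt]

lemma paste_n {n : ℕ} (x : Fin n → ZMod 2) (y1 y2 y3 : ZMod 2) (hp : n < n + 3) :
    paste x y1 y2 y3 ⟨n, hp⟩ = y1 := by simp [paste]

lemma paste_n1 {n : ℕ} (x : Fin n → ZMod 2) (y1 y2 y3 : ZMod 2) (hp : n + 1 < n + 3) :
    paste x y1 y2 y3 ⟨n + 1, hp⟩ = y2 := by simp [paste]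

lemma paste_n2 {n : ℕ} (x : Fin n → ZMod 2) (y1 y2 y3 : ZMod 2) (hp : n + 2 < n + 3) :
    paste x y1 y2 y3 ⟨n + 2, hp⟩ = y3 := by simp [paste]

lemma sum3_split {n : ℕ} (F : Fin (n + 3) → ZMod 2) :
    ∑ i, F i = (∑ i : Fin n, F ⟨i, E_lt_i i⟩) + F ⟨n, E_lt_0 n⟩ + F ⟨n+1, E_lt_1 n⟩
      + F ⟨n+2, E_lt_2 n⟩ := by
  rw [Fin.sum_univ_castSucc, Fin.sum_univ_castSucc, Fin.sum_univ_castSucc]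
  rfl

lemma natsum3_split {n : ℕ} (F : Fin (n + 3) → ℕ) :
    ∑ i, F i = (∑ i : Fin n, F ⟨i, E_lt_i i⟩) + F ⟨n, E_lt_0 n⟩ + F ⟨n+1, E_lt_1 n⟩
      + F ⟨n+2, E_lt_2 n⟩ := by
  rw [Fin.sum_univ_castSucc, Fin.sum_univ_castSucc, Fin.sum_univ_castSucc]
  rfl

lemma bfInner_paste {n : ℕ} (α : Fin (n+3) → ZMod 2) (x : Fin n → ZMod 2) (y1 y2 y3 : ZMod 2) :
    bfInner α (paste x y1 y2 y3)
    = bfInner (fun i : Fin n => α ⟨i, E_lt_i i⟩) x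
      + α ⟨n, E_lt_0 n⟩ * y1 + α ⟨n+1, E_lt_1 n⟩ * y2 + α ⟨n+2, E_lt_2 n⟩ * y3 := by
  unfold bfInner
  rw [sum3_split (fun i => α i * paste x y1 y2 y3 i)]
  rw [paste_n, paste_n1, paste_n2]
  congr 1; congr 1; congr 1
  apply Finset.sum_congr rfl; intro i _; rw [paste_lt]

lemma wt_split_s14 {n : ℕ} (α : Fin (n+3) → ZMod 2) :
    wt α = wt (fun i : Fin n => α ⟨i, E_lt_i i⟩)
      + (if α ⟨n, E_lt_0 n⟩ ≠ 0 then 1 else 0)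
      + (if α ⟨n+1, E_lt_1 n⟩ ≠ 0 then 1 else 0)
      + (if α ⟨n+2, E_lt_2 n⟩ ≠ 0 then 1 else 0) := by
  unfold wt
  rw [Finset.card_filter, Finset.card_filter]
  rw [natsum3_split (fun i => if α i ≠ 0 then 1 else 0)]

theorem H_resilient (n m : ℕ) (g h : BF n) (H : BF (n + 3))
    (hg : resilient m g) (hh : resilient m h)
    (hH : ∀ v : Fin (n + 3) → ZMod 2,
      H v = v ⟨n + 2, by omega⟩ + v ⟨n, by omega⟩
            + (1 + v ⟨n + 2, by omega⟩ + v ⟨n + 1, by omega⟩)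
                * g (fun i : Fin n => v ⟨i.val, by omega⟩)
            + (v ⟨n + 2, by omega⟩ + v ⟨n + 1, by omega⟩)
                * h (fun i : Fin n => v ⟨i.val, by omega⟩)) :
    resilient (m + 2) H := by
  intro α hα
  set a : Fin n → ZMod 2 := fun i => α ⟨i, by omega⟩ with ha
  set b1 : ZMod 2 := α ⟨n, by omega⟩ with hb1
  set b2 : ZMod 2 := α ⟨n+1, by omega⟩ with hb2
  set b3 : ZMod 2 := α ⟨n+2, by omega⟩ with hb3
  have key : walsh H α
      = (1 - chi b1) * ((1 - chi (b2 + b3)) * walsh g a + (chi b2 - chi b3) * walsh h a) := by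
    have e1 : walsh H α = ∑ p : (Fin n → ZMod 2) × ZMod 2 × ZMod 2 × ZMod 2,
        chi (H (E n p) + bfInner α (E n p)) := by
      rw [Equiv.sum_comp (E n) (fun v => chi (H v + bfInner α v))]
      rfl
    rw [e1]
    rw [Fintype.sum_prod_type]
    have e2 : ∀ x : Fin n → ZMod 2,
        (∑ q : ZMod 2 × ZMod 2 × ZMod 2, chi (H (E n (x, q)) + bfInner α (E n (x, q))))
        = (1 - chi b1) * ((1 - chi (b2 + b3)) * chi (g x + bfInner a x)
            + (chi b2 - chi b3) * chi (h x + bfInner a x)) := by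
      intro x
      rw [Fintype.sum_prod_type, ← ysum_eq b1 b2 b3 (g x) (h x) (bfInner a x)]
      apply Finset.sum_congr rfl; intro y1 _
      rw [Fintype.sum_prod_type]
      apply Finset.sum_congr rfl; intro y2 _
      apply Finset.sum_congr rfl; intro y3 _
      have hE : E n (x, y1, y2, y3) = paste x y1 y2 y3 := rfl
      rw [hE, hH (paste x y1 y2 y3), bfInner_paste]
      have hrest : (fun i : Fin n => paste x y1 y2 y3 ⟨i.val, by omega⟩) = x := by
        funext i; exact paste_lt x y1 y2 y3 i (by omega)
      rw [hrest, paste_n, paste_n1, paste_n2]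
    calc (∑ x : Fin n → ZMod 2, ∑ q : ZMod 2 × ZMod 2 × ZMod 2,
            chi (H (E n (x, q)) + bfInner α (E n (x, q))))
        = ∑ x : Fin n → ZMod 2, (1 - chi b1) * ((1 - chi (b2 + b3)) * chi (g x + bfInner a x)
            + (chi b2 - chi b3) * chi (h x + bfInner a x)) := by
          exact Finset.sum_congr rfl (fun x _ => e2 x)
      _ = (1 - chi b1) * ((1 - chi (b2 + b3)) * walsh g a + (chi b2 - chi b3) * walsh h a) := by
          rw [← Finset.mul_sum, Finset.sum_add_distrib, ← Finset.mul_sum, ← Finset.mul_sum]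
          rfl
  rcases two_cases b1 with h1 | h1
  · rw [key, h1]; norm_num [chi]
  · rcases eq_or_ne b2 b3 with h23 | h23
    · rw [key, h23]
      have : chi (b3 + b3) = 1 := by
        rcases two_cases b3 with h | h <;> rw [h] <;> decide
      rw [this]; ring
    · have hwa : wt a ≤ m := by
        have := wt_split_s14 α
        rw [← ha, ← hb1, ← hb2, ← hb3] at this
        have hb1' : b1 ≠ 0 := by rw [h1]; decide
        have h2or : (if b2 ≠ 0 then 1 else 0) + (if b3 ≠ 0 then 1 else 0) = 1 := by
          rcases two_cases b2 with h | h <;> rcases two_cases b3 with h' | h' <;>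
            simp [h, h'] at h23 ⊢
        rw [if_pos hb1'] at this
        omega
      rw [key, hg a hwa, hh a hwa]; ring
end

section
/- Let G, H be (n+3)-variable functions such that for every linear function ℓ on n+3 variables at least one of G⊕ℓ, H⊕ℓ is balanced, and let F = Concat(G,H) on n+4 variables, i.e., F = (1⊕X_{n+4})G ⊕ X_{n+4}H. Then nl(F) = 2^{n+2} + min{nl(G), nl(H)}; in particular if nl(G) = nl(H), then nl(F) = 2^{n+2} + nl(G). -/
open Finset

lemma sum_zmod2 (g : ZMod 2 → ℕ) : ∑ t : ZMod 2, g t = g 0 + g 1 :=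
  Fin.sum_univ_two g

lemma bfInner_snoc {m : ℕ} (a w : Fin m → ZMod 2) (b t : ZMod 2) :
    bfInner (Fin.snoc a b) (Fin.snoc w t) = bfInner a w + b * t := by
  unfold bfInner
  rw [Fin.sum_univ_castSucc]
  simp

lemma hdist_add_hdist_compl {N : ℕ} (f g : BF N) :
    hdist f g + hdist f (fun x => 1 + g x) = 2 ^ N := by
  classical
  unfold hdist
  have h2 : (Finset.univ.filter (fun x => f x ≠ (fun x => 1 + g x) x)) =
      Finset.univ.filter (fun x => ¬ (f x ≠ g x)) := by
    apply Finset.filter_congr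
    intro x _
    have : ∀ u v : ZMod 2, (u ≠ 1 + v) ↔ ¬ (u ≠ v) := by decide
    exact this (f x) (g x)
  rw [h2, Finset.card_filter_add_card_filter_not]
  simp [Finset.card_univ, ZMod.card]

lemma hdist_of_balanced {N : ℕ} (f ℓ : BF N)
    (h : balanced (fun v => f v + ℓ v)) : hdist f ℓ = 2 ^ (N - 1) := by
  unfold balanced at h
  unfold hdist
  rw [← h]
  apply congrArg
  apply Finset.filter_congr
  intro x _
  have : ∀ u v : ZMod 2, (u ≠ v) ↔ (u + v = 1) := by decide
  simpa using this (f x) (ℓ x)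

lemma hdist_const_of_balanced {m : ℕ} (f ℓ : BF (m+1))
    (h : balanced (fun v => f v + ℓ v)) (c : ZMod 2) :
    hdist f (fun x => c + ℓ x) = 2 ^ m := by
  have h0 : hdist f ℓ = 2 ^ m := hdist_of_balanced f ℓ h
  have hc : c = 0 ∨ c = 1 := by revert c; decide
  rcases hc with rfl | rfl
  · simpa using h0
  · have h1 := hdist_add_hdist_compl f ℓ
    have hp : (2:ℕ) ^ (m+1) = 2 ^ m + 2 ^ m := by rw [pow_succ]; ring
    omega

def snocEquiv (n : ℕ) : ((Fin n → ZMod 2) × ZMod 2) ≃ (Fin (n+1) → ZMod 2) where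
  toFun p := Fin.snoc p.1 p.2
  invFun v := (fun i => v i.castSucc, v (Fin.last n))
  left_inv p := by simp
  right_inv v := Fin.snoc_init_self v

lemma F_snoc (n : ℕ) (G H : BF (n+3)) (F : BF (n+4))
    (hF : ∀ v : Fin (n + 4) → ZMod 2,
      F v = (1 + v ⟨n + 3, by linarith⟩) * G (fun i : Fin (n + 3) => v ⟨i.val, by linarith [i.isLt]⟩)
            + v ⟨n + 3, by linarith⟩ * H (fun i : Fin (n + 3) => v ⟨i.val, by linarith [i.isLt]⟩))
    (w : Fin (n+3) → ZMod 2) (t : ZMod 2) :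
    F (Fin.snoc w t) = (1 + t) * G w + t * H w := by
  rw [hF]
  have h1 : (Fin.snoc w t : Fin (n+4) → ZMod 2) ⟨n+3, by linarith⟩ = t := Fin.snoc_last _ _
  have h2 : (fun i : Fin (n+3) => (Fin.snoc w t : Fin (n+4) → ZMod 2) ⟨i.val, by linarith [i.isLt]⟩) = w := by
    funext i
    show (Fin.snoc w t : Fin (n+4) → ZMod 2) i.castSucc = w i
    simp
  rw [h1, h2]

lemma hdist_concat_snoc (n : ℕ) (G H : BF (n+3)) (F : BF (n+4))
    (hF : ∀ v : Fin (n + 4) → ZMod 2,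
      F v = (1 + v ⟨n + 3, by linarith⟩) * G (fun i : Fin (n + 3) => v ⟨i.val, by linarith [i.isLt]⟩)
            + v ⟨n + 3, by linarith⟩ * H (fun i : Fin (n + 3) => v ⟨i.val, by linarith [i.isLt]⟩))
    (a : Fin (n+3) → ZMod 2) (b c : ZMod 2) :
    hdist F (fun v => c + bfInner (Fin.snoc a b) v)
      = hdist G (fun w => c + bfInner a w) + hdist H (fun w => (c + b) + bfInner a w) := by
  have hG : ∀ w, F (Fin.snoc w (0:ZMod 2)) = G w := by
    intro w; rw [F_snoc n G H F hF]; ring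
  have hH : ∀ w, F (Fin.snoc w (1:ZMod 2)) = H w := by
    intro w; rw [F_snoc n G H F hF]
    have : ∀ x y : ZMod 2, (1+1)*x + 1*y = y := by decide
    exact this _ _
  calc hdist F (fun v => c + bfInner (Fin.snoc a b) v)
      = ∑ v : Fin (n+4) → ZMod 2,
          if F v ≠ c + bfInner (Fin.snoc a b) v then (1:ℕ) else 0 :=
        Finset.card_filter _ _
    _ = ∑ p : (Fin (n+3) → ZMod 2) × ZMod 2,
          if F (Fin.snoc p.1 p.2) ≠ c + bfInner (Fin.snoc a b) (Fin.snoc p.1 p.2) then (1:ℕ) else 0 :=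
        (Equiv.sum_comp (snocEquiv (n+3)) _).symm
    _ = ∑ w : Fin (n+3) → ZMod 2, ∑ t : ZMod 2,
          (if F (Fin.snoc w t) ≠ c + bfInner (Fin.snoc a b) (Fin.snoc w t) then (1:ℕ) else 0) :=
        Fintype.sum_prod_type _
    _ = ∑ w : Fin (n+3) → ZMod 2,
          ((if G w ≠ c + bfInner a w then (1:ℕ) else 0)
           + (if H w ≠ (c + b) + bfInner a w then (1:ℕ) else 0)) := by
        apply Finset.sum_congr rfl
        intro w _
        have e0 : (c : ZMod 2) + (bfInner a w + b * 0) = c + bfInner a w := by ring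
        have e1 : (c : ZMod 2) + (bfInner a w + b * 1) = (c + b) + bfInner a w := by ring
        rw [sum_zmod2 (fun t => if F (Fin.snoc w t) ≠ c + bfInner (Fin.snoc a b) (Fin.snoc w t) then (1:ℕ) else 0)]
        simp only [hG, hH, bfInner_snoc, e0, e1]
    _ = hdist G (fun w => c + bfInner a w) + hdist H (fun w => (c + b) + bfInner a w) := by
        rw [Finset.sum_add_distrib]
        exact congrArg₂ (· + ·) (Finset.card_filter _ _).symm (Finset.card_filter _ _).symm

lemma nl_mem {N : ℕ} (f : BF N) :
    ∃ a c, nl f = hdist f (fun x => c + bfInner a x) := by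
  have h : ({d | ∃ (a : Fin N → ZMod 2) (c : ZMod 2),
      d = hdist f (fun x => c + bfInner a x)} : Set ℕ).Nonempty := ⟨_, 0, 0, rfl⟩
  exact Nat.sInf_mem h

lemma nl_le {N : ℕ} (f : BF N) (a : Fin N → ZMod 2) (c : ZMod 2) :
    nl f ≤ hdist f (fun x => c + bfInner a x) :=
  Nat.sInf_le ⟨a, c, rfl⟩

lemma two_nl_le {N : ℕ} (f : BF N) : 2 * nl f ≤ 2 ^ N := by
  have h0 := nl_le f 0 0
  have h1 := nl_le f 0 1
  have h2 := hdist_add_hdist_compl f (fun x => (0:ZMod 2) + bfInner 0 x)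
  simp only [zero_add] at h0 h1 h2
  omega


theorem nl_concat (n : ℕ) (G H : BF (n + 3)) (F : BF (n + 4))
    (hbal : ∀ a : Fin (n + 3) → ZMod 2,
      balanced (fun v => G v + bfInner a v) ∨ balanced (fun v => H v + bfInner a v))
    (hF : ∀ v : Fin (n + 4) → ZMod 2,
      F v = (1 + v ⟨n + 3, by omega⟩) * G (fun i : Fin (n + 3) => v ⟨i.val, by omega⟩)
            + v ⟨n + 3, by omega⟩ * H (fun i : Fin (n + 3) => v ⟨i.val, by omega⟩)) :
    nl F = 2 ^ (n + 2) + min (nl G) (nl H) := by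
  have hconcat := hdist_concat_snoc n G H F hF
  have ezm : ∀ u v : ZMod 2, u + (u + v) = v := by decide
  have hlow : 2 ^ (n+2) + min (nl G) (nl H) ≤ nl F := by
    refine le_csInf ⟨_, 0, 0, rfl⟩ ?_
    rintro d ⟨a, c, rfl⟩
    rw [show a = Fin.snoc (Fin.init a) (a (Fin.last (n+3))) from (Fin.snoc_init_self a).symm,
      hconcat (Fin.init a) (a (Fin.last (n+3))) c]
    rcases hbal (Fin.init a) with hb | hb
    · have hgd : hdist G (fun w => c + bfInner (Fin.init a) w) = 2 ^ (n+2) :=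
        hdist_const_of_balanced G _ hb c
      have hh := nl_le H (Fin.init a) (c + a (Fin.last (n+3)))
      have hm : min (nl G) (nl H) ≤ nl H := min_le_right _ _
      omega
    · have hhd : hdist H (fun w => (c + a (Fin.last (n+3))) + bfInner (Fin.init a) w) = 2 ^ (n+2) :=
        hdist_const_of_balanced H _ hb _
      have hg := nl_le G (Fin.init a) c
      have hm : min (nl G) (nl H) ≤ nl G := min_le_left _ _
      omega
  have key : ∀ (a : Fin (n+3) → ZMod 2) (c1 c2 : ZMod 2),
      nl F ≤ hdist G (fun w => c1 + bfInner a w) + hdist H (fun w => c2 + bfInner a w) := by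
    intro a c1 c2
    calc nl F ≤ hdist F (fun v => c1 + bfInner (Fin.snoc a (c1 + c2)) v) := nl_le F _ _
      _ = _ := by rw [hconcat, ezm c1 c2]
  have hup : nl F ≤ 2 ^ (n+2) + min (nl G) (nl H) := by
    rcases le_total (nl G) (nl H) with hle | hle
    · rw [min_eq_left hle]
      obtain ⟨a, c, hac⟩ := nl_mem G
      rcases hbal a with hb | hb
      · have hg2 : nl G = 2 ^ (n+2) := by rw [hac, hdist_const_of_balanced G _ hb c]
        have h2 := two_nl_le F
        have hp : (2:ℕ)^(n+4) = 2^(n+2)*4 := by rw [show n+4 = (n+2)+2 by omega, pow_add]; norm_num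
        omega
      · have hH2 := hdist_const_of_balanced H _ hb
        have hk := key a c 0
        rw [hH2 0, ← hac] at hk
        omega
    · rw [min_eq_right hle]
      obtain ⟨a, c, hac⟩ := nl_mem H
      rcases hbal a with hb | hb
      · have hG2 := hdist_const_of_balanced G _ hb
        have hk := key a 0 c
        rw [hG2 0, ← hac] at hk
        omega
      · have hh2 : nl H = 2 ^ (n+2) := by rw [hac, hdist_const_of_balanced H _ hb c]
        have h2 := two_nl_le F
        have hp : (2:ℕ)^(n+4) = 2^(n+2)*4 := by rw [show n+4 = (n+2)+2 by omega, pow_add]; norm_num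
        omega
  omega
end
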